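/- arXiv:1711.00050 — 5 statements merged into one kernel-verified Lean document; each statement's English description precedes it below -/
import Mathlib

section
/- Suppose that for every pair a, b ∈ G one has ε(S;a,b) → 0 as S → G; that is, for every ε > 0 there is a finite set F ⊆ G such that every finite S with F ∪ {a,b} ⊆ S ⊆ G satisfies ε(S;a,b) < ε. Then every μ-harmonic function f : G → ℝ with f(g) > 0 for all g ∈ G is constant. -/
open Classical in
/-- The probability that the `μ`-random walk started at `a` first exits the set `S`
at the point `x`, written as a sum over all step-lists `L` whose proper-prefix
positions stay in `S` and whose final position is `x`. -/
noncomputable def exitProb {G : Type*} [Group G] (μ : G → ℝ) (S : Set G) (a x : G) : ℝ :=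
  ∑' L : List G,
    if (∀ k < L.length, a * (L.take k).prod ∈ S) ∧ a * L.prod = x then (L.map μ).prod else 0

/-- The (outer) boundary `∂S` of a set `S`: points outside `S` reachable in one
`μ`-step from `S`. -/
def bdry {G : Type*} [Group G] (μ : G → ℝ) (S : Set G) : Set G :=
  {x | x ∉ S ∧ ∃ y ∈ S, 0 < μ (y⁻¹ * x)}

/-- `ε(S; a, b) = max { |μ_S(a,x) − μ_S(b,x)| / μ_S(a,x) : x ∈ ∂S, μ_S(a,x) > 0 }`,
interpreted as `0` if no such `x` exists (since `sSup ∅ = 0` over `ℝ`). -/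
noncomputable def epsRatio {G : Type*} [Group G] (μ : G → ℝ) (S : Set G) (a b : G) : ℝ :=
  sSup {r : ℝ | ∃ x ∈ bdry μ S, 0 < exitProb μ S a x ∧
    r = |exitProb μ S a x - exitProb μ S b x| / exitProb μ S a x}

/-- `f` is `μ`-harmonic: `f g = ∑_s μ(s) f(g s)` for every `g`. -/
def IsMuHarmonic {G : Type*} [Group G] (μ : G → ℝ) (f : G → ℝ) : Prop :=
  ∀ g : G, f g = ∑ᶠ s : G, μ s * f (g * s)

/-- Directed distance: the least `k` such that `g = a · s₁ ⋯ s_k` with all `sᵢ ∈ supp μ`. -/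
noncomputable def dDist {G : Type*} [Group G] (μ : G → ℝ) (a g : G) : ℕ :=
  sInf {k : ℕ | ∃ L : List G, L.length = k ∧ (∀ s ∈ L, 0 < μ s) ∧ a * L.prod = g}

/-- The directed ball `B(a, r)`. -/
def dBall {G : Type*} [Group G] (μ : G → ℝ) (a : G) (r : ℕ) : Set G :=
  {g | dDist μ a g ≤ r}

/-! ### Auxiliary machinery -/

section Aux
set_option linter.unusedSectionVars false

variable {G : Type*} [Group G] [DecidableEq G]

/-- Lists of length `n` with entries in `W`. -/
def listsLen (W : Finset G) : ℕ → Finset (List G)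
  | 0 => {[]}
  | (n+1) => ((listsLen W n) ×ˢ W).image fun p => p.1 ++ [p.2]

lemma mem_listsLen {W : Finset G} :
    ∀ {n : ℕ} {L : List G}, L ∈ listsLen W n ↔ L.length = n ∧ ∀ s ∈ L, s ∈ W := by
  intro n
  induction n with
  | zero => intro L; simp [listsLen]; rintro rfl; simp
  | succ n ih =>
    intro L
    simp only [listsLen, Finset.mem_image, Finset.mem_product]
    constructor
    · rintro ⟨⟨L1, s⟩, ⟨h1, h2⟩, rfl⟩
      obtain ⟨hlen, hmem⟩ := ih.1 h1
      refine ⟨by simp [hlen], ?_⟩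
      intro t ht
      rcases List.mem_append.1 ht with h | h
      · exact hmem t h
      · simpa using (List.mem_singleton.1 h) ▸ h2
    · rintro ⟨hlen, hmem⟩
      have hne : L ≠ [] := by rintro rfl; simp at hlen
      refine ⟨⟨L.dropLast, L.getLast hne⟩, ⟨?_, ?_⟩, ?_⟩
      · exact ih.2 ⟨by simp [List.length_dropLast, hlen],
          fun t ht => hmem t (List.dropLast_subset L ht)⟩
      · exact hmem _ (List.getLast_mem hne)
      · exact List.dropLast_append_getLast hne

lemma sum_listsLen_succ (W : Finset G) (n : ℕ) (φ : List G → ℝ) :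
    ∑ L ∈ listsLen W (n+1), φ L = ∑ L ∈ listsLen W n, ∑ s ∈ W, φ (L ++ [s]) := by
  rw [show listsLen W (n+1) = ((listsLen W n) ×ˢ W).image (fun p => p.1 ++ [p.2]) from rfl,
    Finset.sum_image, Finset.sum_product]
  rintro ⟨L1, s1⟩ h1 ⟨L2, s2⟩ h2 heq
  simp only [Finset.mem_coe, Finset.mem_product] at h1 h2
  have hl : L1.length = L2.length := by
    rw [(mem_listsLen.1 h1.1).1, (mem_listsLen.1 h2.1).1]
  obtain ⟨h3, h4⟩ := List.append_inj heq hl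
  simp only [List.cons.injEq] at h4
  exact Prod.ext h3 h4.1

lemma listsLen_add (W : Finset G) (m n : ℕ) :
    listsLen W (m + n) = ((listsLen W m) ×ˢ (listsLen W n)).image fun p => p.1 ++ p.2 := by
  ext L
  simp only [mem_listsLen, Finset.mem_image, Finset.mem_product]
  constructor
  · rintro ⟨hlen, hmem⟩
    refine ⟨(L.take m, L.drop m), ⟨⟨?_, fun s hs => hmem s (L.take_subset m hs)⟩,
      ⟨?_, fun s hs => hmem s (L.drop_subset m hs)⟩⟩, by simp⟩
    · rw [List.length_take]; omega
    · rw [List.length_drop]; omega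
  · rintro ⟨⟨L1, L2⟩, ⟨⟨h1l, h1m⟩, ⟨h2l, h2m⟩⟩, rfl⟩
    refine ⟨by simp [h1l, h2l], fun s hs => ?_⟩
    rcases List.mem_append.1 hs with h | h
    exacts [h1m s h, h2m s h]

noncomputable def wt (μ : G → ℝ) (L : List G) : ℝ := (L.map μ).prod

lemma wt_nonneg {μ : G → ℝ} (hpos : ∀ s, 0 ≤ μ s) (L : List G) : 0 ≤ wt μ L := by
  apply List.prod_nonneg; intro x hx
  obtain ⟨s, _, rfl⟩ := List.mem_map.1 hx
  exact hpos s

lemma wt_pos {μ : G → ℝ} {L : List G} (h : ∀ s ∈ L, 0 < μ s) : 0 < wt μ L := by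
  unfold wt
  induction L with
  | nil => simp
  | cons a t ih =>
    simp only [List.map_cons, List.prod_cons]
    exact mul_pos (h a (by simp)) (ih fun s hs => h s (List.mem_cons_of_mem _ hs))

lemma wt_append (μ : G → ℝ) (L1 L2 : List G) :
    wt μ (L1 ++ L2) = wt μ L1 * wt μ L2 := by
  simp [wt]

lemma wt_singleton (μ : G → ℝ) (s : G) : wt μ [s] = μ s := by simp [wt]

open Classical in
noncomputable def AW (μ : G → ℝ) (W : Finset G) (S : Set G) (h : G → ℝ) (c : G) (n : ℕ) : ℝ :=
  ∑ L ∈ listsLen W n,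
    if ∀ k ≤ L.length, c * (L.take k).prod ∈ S then wt μ L * h (c * L.prod) else 0

open Classical in
noncomputable def EW (μ : G → ℝ) (W : Finset G) (S : Set G) (h : G → ℝ) (c : G) (n : ℕ) : ℝ :=
  ∑ L ∈ listsLen W n,
    if (∀ k < L.length, c * (L.take k).prod ∈ S) ∧ c * L.prod ∉ S
    then wt μ L * h (c * L.prod) else 0

open Classical in
noncomputable def pE (μ : G → ℝ) (W : Finset G) (S : Set G) (c x : G) (n : ℕ) : ℝ :=
  ∑ L ∈ listsLen W n,
    if (∀ k < L.length, c * (L.take k).prod ∈ S) ∧ c * L.prod = x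
    then (L.map μ).prod else 0

variable {μ : G → ℝ} {W : Finset G} {S : Set G}

open Classical in
lemma AW_rec (h : G → ℝ)
    (hh : ∀ g : G, h g = ∑ s ∈ W, μ s * h (g * s)) (c : G) (n : ℕ) :
    AW μ W S h c n = AW μ W S h c (n+1) + EW μ W S h c (n+1) := by
  unfold AW EW
  rw [← Finset.sum_add_distrib]
  have step1 : ∀ L : List G,
      ((if ∀ k ≤ L.length, c * (L.take k).prod ∈ S then wt μ L * h (c * L.prod) else 0) +
       (if (∀ k < L.length, c * (L.take k).prod ∈ S) ∧ c * L.prod ∉ S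
        then wt μ L * h (c * L.prod) else 0)) =
      (if ∀ k < L.length, c * (L.take k).prod ∈ S then wt μ L * h (c * L.prod) else 0) := by
    intro L
    have hiff : (∀ k ≤ L.length, c * (L.take k).prod ∈ S) ↔
        (∀ k < L.length, c * (L.take k).prod ∈ S) ∧ c * L.prod ∈ S := by
      constructor
      · intro hA
        exact ⟨fun k hk => hA k hk.le, by simpa using hA L.length le_rfl⟩
      · rintro ⟨h1, h2⟩ k hk
        rcases lt_or_eq_of_le hk with hk' | rfl
        · exact h1 k hk'
        · simpa using h2
    by_cases hp : ∀ k < L.length, c * (L.take k).prod ∈ S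
    · by_cases he : c * L.prod ∈ S
      · rw [if_pos (hiff.2 ⟨hp, he⟩), if_neg (by tauto), if_pos hp]; ring
      · rw [if_neg (by tauto), if_pos ⟨hp, he⟩, if_pos hp]; ring
    · rw [if_neg (by tauto), if_neg (by tauto), if_neg hp]; ring
  simp only [step1]
  rw [sum_listsLen_succ]
  apply Finset.sum_congr rfl
  intro L _
  have hcond : ∀ s : G,
      ((∀ k < (L ++ [s]).length, c * ((L ++ [s]).take k).prod ∈ S) ↔
        ∀ k ≤ L.length, c * (L.take k).prod ∈ S) := by
    intro s
    simp only [List.length_append, List.length_singleton]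
    constructor
    · intro hA k hk
      have := hA k (by omega)
      rwa [List.take_append_of_le_length hk] at this
    · intro hA k hk
      have hk' : k ≤ L.length := by omega
      rw [List.take_append_of_le_length hk']
      exact hA k hk'
  by_cases hA : ∀ k ≤ L.length, c * (L.take k).prod ∈ S
  · rw [if_pos hA]
    calc wt μ L * h (c * L.prod) = wt μ L * ∑ s ∈ W, μ s * h (c * L.prod * s) := by
          rw [← hh (c * L.prod)]
      _ = ∑ s ∈ W, wt μ (L ++ [s]) * h (c * (L ++ [s]).prod) := by
          rw [Finset.mul_sum]
          apply Finset.sum_congr rfl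
          intro s _
          rw [wt_append]
          simp [wt, mul_assoc]
      _ = ∑ s ∈ W, if (∀ k < (L ++ [s]).length, c * ((L ++ [s]).take k).prod ∈ S)
            then wt μ (L ++ [s]) * h (c * (L ++ [s]).prod) else 0 := by
          apply Finset.sum_congr rfl
          intro s _
          rw [if_pos ((hcond s).2 hA)]
  · rw [if_neg hA]
    symm
    apply Finset.sum_eq_zero
    intro s _
    rw [if_neg (fun hc => hA ((hcond s).1 hc))]

lemma AW_zero (h : G → ℝ) {c : G} (hc : c ∈ S) : AW μ W S h c 0 = h c := by
  unfold AW
  rw [show listsLen W 0 = ({[]} : Finset (List G)) from rfl, Finset.sum_singleton]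
  rw [if_pos]
  · simp [wt]
  · intro k hk
    have : k = 0 := Nat.le_zero.1 hk
    subst this
    simpa using hc

lemma EW_zero (h : G → ℝ) {c : G} (hc : c ∈ S) : EW μ W S h c 0 = 0 := by
  unfold EW
  rw [show listsLen W 0 = ({[]} : Finset (List G)) from rfl, Finset.sum_singleton]
  rw [if_neg]
  rintro ⟨-, h2⟩
  exact h2 (by simpa using hc)

lemma AW_nonneg (hpos : ∀ s, 0 ≤ μ s) {h : G → ℝ} (hh0 : ∀ g, 0 ≤ h g) (c : G) (n : ℕ) :
    0 ≤ AW μ W S h c n := by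
  apply Finset.sum_nonneg
  intro L _
  split
  · exact mul_nonneg (wt_nonneg hpos L) (hh0 _)
  · exact le_rfl

lemma EW_nonneg (hpos : ∀ s, 0 ≤ μ s) {h : G → ℝ} (hh0 : ∀ g, 0 ≤ h g) (c : G) (n : ℕ) :
    0 ≤ EW μ W S h c n := by
  apply Finset.sum_nonneg
  intro L _
  split
  · exact mul_nonneg (wt_nonneg hpos L) (hh0 _)
  · exact le_rfl

lemma pE_nonneg (hpos : ∀ s, 0 ≤ μ s) (c x : G) (n : ℕ) : 0 ≤ pE μ W S c x n := by
  apply Finset.sum_nonneg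
  intro L _
  split
  · exact wt_nonneg hpos L
  · exact le_rfl

lemma rep_n (h : G → ℝ) (hh : ∀ g : G, h g = ∑ s ∈ W, μ s * h (g * s)) {c : G} (hc : c ∈ S) :
    ∀ n : ℕ, h c = AW μ W S h c n + ∑ m ∈ Finset.range (n+1), EW μ W S h c m := by
  intro n
  induction n with
  | zero => rw [AW_zero h hc]; simp [EW_zero h hc]
  | succ n ih =>
    rw [Finset.sum_range_succ, ih, AW_rec h hh c n]
    ring

lemma mass (hsumW : ∑ s ∈ W, μ s = 1) : ∀ n : ℕ, ∑ L ∈ listsLen W n, wt μ L = 1 := by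
  intro n
  induction n with
  | zero => simp [listsLen, wt]
  | succ n ih =>
    rw [sum_listsLen_succ]
    calc ∑ L ∈ listsLen W n, ∑ s ∈ W, wt μ (L ++ [s])
        = ∑ L ∈ listsLen W n, wt μ L := by
          apply Finset.sum_congr rfl
          intro L _
          simp only [wt_append, wt_singleton, ← Finset.mul_sum, hsumW, mul_one]
      _ = 1 := ih

lemma AW_one_le_one (hpos : ∀ s, 0 ≤ μ s) (hsumW : ∑ s ∈ W, μ s = 1) (c : G) (n : ℕ) :
    AW μ W S (fun _ => (1:ℝ)) c n ≤ 1 := by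
  calc AW μ W S (fun _ => (1:ℝ)) c n ≤ ∑ L ∈ listsLen W n, wt μ L := by
        apply Finset.sum_le_sum
        intro L _
        split
        · simp
        · exact wt_nonneg hpos L
    _ = 1 := mass hsumW n

lemma AW_one_antitone (hpos : ∀ s, 0 ≤ μ s) (hsumW : ∑ s ∈ W, μ s = 1) (c : G) :
    ∀ {m n : ℕ}, m ≤ n → AW μ W S (fun _ => (1:ℝ)) c n ≤ AW μ W S (fun _ => (1:ℝ)) c m := by
  have hh : ∀ g : G, (fun _ => (1:ℝ)) g = ∑ s ∈ W, μ s * (fun _ => (1:ℝ)) (g * s) := by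
    intro g; simp [hsumW]
  intro m n hmn
  induction n with
  | zero => simp_all
  | succ n ih =>
    rcases Nat.lt_or_ge m (n+1) with h | h
    · have h1 := ih (by omega)
      have h2 : AW μ W S (fun _ => (1:ℝ)) c (n+1) ≤ AW μ W S (fun _ => (1:ℝ)) c n := by
        rw [AW_rec _ hh c n]
        have := EW_nonneg (W := W) (S := S) hpos (fun g => zero_le_one) c (n+1)
        linarith
      linarith
    · have : m = n + 1 := by omega
      subst this; exact le_rfl

open Classical in
lemma AW_one_append (c : G) (m n : ℕ) :
    AW μ W S (fun _ => (1:ℝ)) c (m + n) =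
      ∑ L ∈ listsLen W m, if ∀ k ≤ L.length, c * (L.take k).prod ∈ S
        then wt μ L * AW μ W S (fun _ => (1:ℝ)) (c * L.prod) n else 0 := by
  unfold AW
  rw [listsLen_add, Finset.sum_image, Finset.sum_product]
  · apply Finset.sum_congr rfl
    intro L1 hL1
    have key : ∀ L2 ∈ listsLen W n,
        ((∀ k ≤ (L1 ++ L2).length, c * ((L1 ++ L2).take k).prod ∈ S) ↔
          ((∀ k ≤ L1.length, c * (L1.take k).prod ∈ S) ∧
            (∀ k ≤ L2.length, (c * L1.prod) * (L2.take k).prod ∈ S))) := by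
      intro L2 _
      constructor
      · intro hA
        constructor
        · intro k hk
          have := hA k (by simp only [List.length_append]; omega)
          rwa [List.take_append_of_le_length hk] at this
        · intro k hk
          have := hA (L1.length + k) (by simp only [List.length_append]; omega)
          rwa [List.take_length_add_append, List.prod_append, ← mul_assoc] at this
      · rintro ⟨h1, h2⟩ k hk
        simp only [List.length_append] at hk
        rcases le_or_gt k L1.length with h | h
        · rw [List.take_append_of_le_length h]; exact h1 k h
        · have hk2 : k = L1.length + (k - L1.length) := by omega
          rw [hk2, List.take_length_add_append, List.prod_append, ← mul_assoc]
          exact h2 _ (by omega)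
    by_cases hA1 : ∀ k ≤ L1.length, c * (L1.take k).prod ∈ S
    · rw [if_pos hA1, Finset.mul_sum]
      apply Finset.sum_congr rfl
      intro L2 hL2
      by_cases hA2 : ∀ k ≤ L2.length, (c * L1.prod) * (L2.take k).prod ∈ S
      · rw [if_pos ((key L2 hL2).2 ⟨hA1, hA2⟩), if_pos hA2, wt_append, List.prod_append]
        ring
      · rw [if_neg (fun hc => hA2 ((key L2 hL2).1 hc).2), if_neg hA2, mul_zero]
    · rw [if_neg hA1]
      apply Finset.sum_eq_zero
      intro L2 hL2
      rw [if_neg (fun hc => hA1 ((key L2 hL2).1 hc).1)]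
  · rintro ⟨L1, L2⟩ h1 ⟨L1', L2'⟩ h2 heq
    simp only [Finset.mem_coe, Finset.mem_product] at h1 h2
    have hl : L1.length = L1'.length := by
      rw [(mem_listsLen.1 h1.1).1, (mem_listsLen.1 h2.1).1]
    obtain ⟨h3, h4⟩ := List.append_inj heq hl
    exact Prod.ext h3 h4

noncomputable def exitF (W : Finset G) {S : Set G} (hS : S.Finite) : Finset G :=
  ((hS.toFinset ×ˢ W).image fun p => p.1 * p.2) \ hS.toFinset

lemma exitF_not_mem {hS : S.Finite} {x : G} (hx : x ∈ exitF W hS) : x ∉ S := by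
  unfold exitF at hx
  have := (Finset.mem_sdiff.1 hx).2
  simpa [Set.Finite.mem_toFinset] using this

lemma exit_mem_exitF (hS : S.Finite) {c : G} (hc : c ∈ S) {L : List G}
    (hWm : ∀ s ∈ L, s ∈ W)
    (hpre : ∀ k < L.length, c * (L.take k).prod ∈ S) (hend : c * L.prod ∉ S) :
    c * L.prod ∈ exitF W hS := by
  have hne : L ≠ [] := by rintro rfl; exact hend (by simpa using hc)
  unfold exitF
  rw [Finset.mem_sdiff]
  constructor
  · rw [Finset.mem_image]
    refine ⟨(c * L.dropLast.prod, L.getLast hne), ?_, ?_⟩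
    · rw [Finset.mem_product]
      constructor
      · rw [Set.Finite.mem_toFinset]
        have h2 : L.length - 1 < L.length := by
          have := List.length_pos_iff.2 hne; omega
        have h1 := hpre _ h2
        rwa [← List.dropLast_eq_take] at h1
      · exact hWm _ (List.getLast_mem hne)
    · show c * L.dropLast.prod * L.getLast hne = c * L.prod
      conv_rhs => rw [← List.dropLast_append_getLast hne]
      rw [List.prod_append, List.prod_singleton, mul_assoc]
  · simpa [Set.Finite.mem_toFinset] using hend

open Classical in
lemma EW_eq_sum_pE (hS : S.Finite) (h : G → ℝ) {c : G} (hc : c ∈ S) (n : ℕ) :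
    EW μ W S h c n = ∑ x ∈ exitF W hS, pE μ W S c x n * h x := by
  unfold EW pE
  have rhs1 : ∀ x : G,
      (∑ L ∈ listsLen W n, if (∀ k < L.length, c * (L.take k).prod ∈ S) ∧ c * L.prod = x
        then (L.map μ).prod else 0) * h x
      = ∑ L ∈ listsLen W n, if (∀ k < L.length, c * (L.take k).prod ∈ S) ∧ c * L.prod = x
        then (L.map μ).prod * h x else 0 := by
    intro x
    rw [Finset.sum_mul]
    apply Finset.sum_congr rfl
    intro L _
    split <;> simp
  simp only [rhs1]
  rw [Finset.sum_comm]
  apply Finset.sum_congr rfl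
  intro L hL
  have hWm : ∀ s ∈ L, s ∈ W := (mem_listsLen.1 hL).2
  by_cases hpre : ∀ k < L.length, c * (L.take k).prod ∈ S
  · have inner : ∀ x ∈ exitF W hS,
        (if (∀ k < L.length, c * (L.take k).prod ∈ S) ∧ c * L.prod = x
          then (L.map μ).prod * h x else 0)
        = (if c * L.prod = x then (L.map μ).prod * h x else 0) := by
      intro x _
      by_cases hx : c * L.prod = x
      · rw [if_pos ⟨hpre, hx⟩, if_pos hx]
      · rw [if_neg (by tauto), if_neg hx]
    rw [Finset.sum_congr rfl inner]
    have : (∑ x ∈ exitF W hS, if c * L.prod = x then (L.map μ).prod * h x else 0)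
        = if c * L.prod ∈ exitF W hS then (L.map μ).prod * h (c * L.prod) else 0 := by
      exact Finset.sum_ite_eq (exitF W hS) (c * L.prod) (fun x => (L.map μ).prod * h x)
    rw [this]
    by_cases hend : c * L.prod ∈ S
    · rw [if_neg (by tauto), if_neg (fun hmem => exitF_not_mem hmem hend)]
    · rw [if_pos ⟨hpre, hend⟩, if_pos (exit_mem_exitF hS hc hWm hpre hend)]
      rfl
  · rw [if_neg (by tauto)]
    symm
    apply Finset.sum_eq_zero
    intro x _
    rw [if_neg (by tauto)]

lemma sum_range_pE_le_one (hS : S.Finite) (hpos : ∀ s, 0 ≤ μ s)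
    (hsumW : ∑ s ∈ W, μ s = 1) {c : G} (hc : c ∈ S) {x : G} (hx : x ∈ exitF W hS) (N : ℕ) :
    ∑ m ∈ Finset.range N, pE μ W S c x m ≤ 1 := by
  have hh : ∀ g : G, (fun _ => (1:ℝ)) g = ∑ s ∈ W, μ s * (fun _ => (1:ℝ)) (g * s) := by
    intro g; simp [hsumW]
  have hrep := rep_n (μ := μ) (W := W) (S := S) (fun _ => (1:ℝ)) hh hc N
  have hEWsum : ∑ m ∈ Finset.range (N+1), EW μ W S (fun _ => (1:ℝ)) c m ≤ 1 := by
    have := AW_nonneg (W := W) (S := S) hpos (h := fun _ => (1:ℝ)) (fun g => zero_le_one) c N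
    linarith
  calc ∑ m ∈ Finset.range N, pE μ W S c x m
      ≤ ∑ m ∈ Finset.range N, EW μ W S (fun _ => (1:ℝ)) c m := by
        apply Finset.sum_le_sum
        intro m _
        have hEW : EW μ W S (fun _ => (1:ℝ)) c m = ∑ y ∈ exitF W hS, pE μ W S c y m := by
          rw [EW_eq_sum_pE hS _ hc m]; simp
        rw [hEW]
        exact Finset.single_le_sum (fun y _ => pE_nonneg (W := W) (S := S) hpos c y m) hx
    _ ≤ ∑ m ∈ Finset.range (N+1), EW μ W S (fun _ => (1:ℝ)) c m := by
        apply Finset.sum_le_sum_of_subset_of_nonneg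
        · exact Finset.range_subset_range.2 (by omega)
        · intro m _ _
          exact EW_nonneg (W := W) (S := S) hpos (fun g => zero_le_one) c m
    _ ≤ 1 := hEWsum

open Classical in
lemma AW_one_submul (hpos : ∀ s, 0 ≤ μ s) {r : ℝ} (hr : 0 ≤ r) {N : ℕ}
    (hb : ∀ d ∈ S, AW μ W S (fun _ => (1:ℝ)) d N ≤ r) (c : G) (m : ℕ) :
    AW μ W S (fun _ => (1:ℝ)) c (m + N) ≤ r * AW μ W S (fun _ => (1:ℝ)) c m := by
  rw [AW_one_append]
  have h2 : r * AW μ W S (fun _ => (1:ℝ)) c m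
      = ∑ L ∈ listsLen W m, if ∀ k ≤ L.length, c * (L.take k).prod ∈ S
          then wt μ L * r else 0 := by
    unfold AW
    rw [Finset.mul_sum]
    apply Finset.sum_congr rfl
    intro L _
    split <;> ring
  rw [h2]
  apply Finset.sum_le_sum
  intro L _
  by_cases hA : ∀ k ≤ L.length, c * (L.take k).prod ∈ S
  · rw [if_pos hA, if_pos hA]
    have hend : c * L.prod ∈ S := by
      have := hA L.length le_rfl
      simpa using this
    exact mul_le_mul_of_nonneg_left (hb _ hend) (wt_nonneg hpos L)
  · rw [if_neg hA, if_neg hA]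

lemma exists_escape (hS : S.Finite) (hpos : ∀ s, 0 ≤ μ s)
    (hW : ∀ s : G, s ∈ W ↔ 0 < μ s) (hsumW : ∑ s ∈ W, μ s = 1)
    (hgen : ∀ g : G, ∃ L : List G, (∀ s ∈ L, 0 < μ s) ∧ L.prod = g)
    {g0 : G} (hg0 : g0 ∉ S) {a : G} (ha : a ∈ S) :
    ∃ (N : ℕ) (r : ℝ), 0 ≤ r ∧ r < 1 ∧ ∀ d ∈ S, AW μ W S (fun _ => (1:ℝ)) d (N+1) ≤ r := by
  classical
  have key : ∀ d : G, ∃ p : ℕ × ℝ, 0 < p.2 ∧ p.2 ≤ 1/2 ∧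
      AW μ W S (fun _ => (1:ℝ)) d p.1 ≤ 1 - p.2 := by
    intro d
    obtain ⟨L, hLpos, hLprod⟩ := hgen (d⁻¹ * g0)
    refine ⟨(L.length, min (wt μ L) (1/2)), lt_min (wt_pos hLpos) (by norm_num),
      min_le_right _ _, ?_⟩
    show AW μ W S (fun _ => (1:ℝ)) d L.length ≤ 1 - min (wt μ L) (1/2)
    have hLW : L ∈ listsLen W L.length :=
      mem_listsLen.2 ⟨rfl, fun s hs => (hW s).2 (hLpos s hs)⟩
    have hterm : (if ∀ k ≤ L.length, d * (L.take k).prod ∈ S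
        then wt μ L * (fun _ => (1:ℝ)) (d * L.prod) else 0) = 0 := by
      rw [if_neg]
      intro hA
      have h1 := hA L.length le_rfl
      rw [List.take_length, hLprod, mul_inv_cancel_left] at h1
      exact hg0 h1
    unfold AW
    rw [← Finset.sum_erase (listsLen W L.length) (a := L)
      (f := fun L' => if ∀ k ≤ L'.length, d * (L'.take k).prod ∈ S
        then wt μ L' * (fun _ => (1:ℝ)) (d * L'.prod) else 0) hterm]
    calc ∑ L' ∈ (listsLen W L.length).erase L,
          (if ∀ k ≤ L'.length, d * (L'.take k).prod ∈ S
            then wt μ L' * (fun _ => (1:ℝ)) (d * L'.prod) else 0)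
        ≤ ∑ L' ∈ (listsLen W L.length).erase L, wt μ L' := by
          apply Finset.sum_le_sum
          intro L' _
          split
          · simp
          · exact wt_nonneg hpos L'
      _ = (∑ L' ∈ listsLen W L.length, wt μ L') - wt μ L := Finset.sum_erase_eq_sub hLW
      _ = 1 - wt μ L := by rw [mass hsumW]
      _ ≤ 1 - min (wt μ L) (1/2) := by
          have := min_le_left (wt μ L) (1/2); linarith
  choose P hP1 hP2 hP3 using key
  have haF : a ∈ hS.toFinset := (Set.Finite.mem_toFinset hS).2 ha
  set N := hS.toFinset.sup (fun d => (P d).1) with hN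
  set δ := hS.toFinset.inf' ⟨a, haF⟩ (fun d => (P d).2) with hδ
  have hδpos : 0 < δ := (Finset.lt_inf'_iff _).2 fun d _ => hP1 d
  have hδle : δ ≤ 1/2 := le_trans (Finset.inf'_le _ haF) (hP2 a)
  refine ⟨N, 1 - δ, by linarith, by linarith, ?_⟩
  intro d hd
  have hdF : d ∈ hS.toFinset := (Set.Finite.mem_toFinset hS).2 hd
  have h1 : (P d).1 ≤ N + 1 :=
    le_trans (Finset.le_sup (f := fun d => (P d).1) hdF) (Nat.le_succ N)
  calc AW μ W S (fun _ => (1:ℝ)) d (N+1) ≤ AW μ W S (fun _ => (1:ℝ)) d (P d).1 :=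
        AW_one_antitone hpos hsumW d h1
    _ ≤ 1 - (P d).2 := hP3 d
    _ ≤ 1 - δ := by
        have := Finset.inf'_le (fun d => (P d).2) hdF
        simp only [← hδ] at this
        linarith

open Classical Filter in
lemma rep_formula (hS : S.Finite) (hpos : ∀ s, 0 ≤ μ s) (hW : ∀ s : G, s ∈ W ↔ 0 < μ s)
    (hsumW : ∑ s ∈ W, μ s = 1) (f : G → ℝ)
    (hharm : ∀ g, f g = ∑ s ∈ W, μ s * f (g * s)) (hfpos : ∀ g, 0 < f g)
    (hesc : ∃ (N : ℕ) (r : ℝ), 0 ≤ r ∧ r < 1 ∧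
      ∀ d ∈ S, AW μ W S (fun _ => (1:ℝ)) d (N+1) ≤ r)
    {c : G} (hc : c ∈ S) :
    f c = ∑ x ∈ exitF W hS, exitProb μ S c x * f x := by
  obtain ⟨N, r, hr0, hr1, hNd⟩ := hesc
  set Np := N + 1 with hNp
  have hq0 : Tendsto (fun n => AW μ W S (fun _ => (1:ℝ)) c n) atTop (nhds 0) := by
    have hsub : ∀ m : ℕ, AW μ W S (fun _ => (1:ℝ)) c (m + Np)
        ≤ r * AW μ W S (fun _ => (1:ℝ)) c m :=
      fun m => AW_one_submul hpos hr0 hNd c m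
    have hpow : ∀ k : ℕ, AW μ W S (fun _ => (1:ℝ)) c (k * Np) ≤ r ^ k := by
      intro k
      induction k with
      | zero => simpa using AW_one_le_one hpos hsumW c 0
      | succ k ih =>
        have h1 : (k+1) * Np = k * Np + Np := by ring
        rw [h1, pow_succ]
        calc AW μ W S (fun _ => (1:ℝ)) c (k * Np + Np)
            ≤ r * AW μ W S (fun _ => (1:ℝ)) c (k * Np) := hsub _
          _ ≤ r * r ^ k := mul_le_mul_of_nonneg_left ih hr0
          _ = r ^ k * r := mul_comm _ _
    apply squeeze_zero
    · intro n; exact AW_nonneg hpos (fun _ => zero_le_one) c n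
    · intro n
      calc AW μ W S (fun _ => (1:ℝ)) c n
          ≤ AW μ W S (fun _ => (1:ℝ)) c (n / Np * Np) :=
            AW_one_antitone hpos hsumW c (Nat.div_mul_le_self n Np)
        _ ≤ r ^ (n / Np) := hpow _
    · have h1 : Tendsto (fun k : ℕ => r ^ k) atTop (nhds 0) :=
        tendsto_pow_atTop_nhds_zero_of_lt_one hr0 hr1
      have h2 : Tendsto (fun n : ℕ => n / Np) atTop atTop := by
        apply Filter.tendsto_atTop_atTop.2
        intro b
        refine ⟨Np * b, fun n hn => ?_⟩
        rw [Nat.le_div_iff_mul_le (by omega)]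
        calc b * Np = Np * b := Nat.mul_comm b Np
          _ ≤ n := hn
      exact h1.comp h2
  have hSne : c ∈ hS.toFinset := (Set.Finite.mem_toFinset hS).2 hc
  set M := hS.toFinset.sup' ⟨c, hSne⟩ f with hM
  have hAWle : ∀ n, AW μ W S f c n ≤ M * AW μ W S (fun _ => (1:ℝ)) c n := by
    intro n
    unfold AW
    rw [Finset.mul_sum]
    apply Finset.sum_le_sum
    intro L _
    by_cases hA : ∀ k ≤ L.length, c * (L.take k).prod ∈ S
    · rw [if_pos hA, if_pos hA]
      have hend : c * L.prod ∈ S := by simpa using hA L.length le_rfl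
      have hfM : f (c * L.prod) ≤ M :=
        Finset.le_sup' f ((Set.Finite.mem_toFinset hS).2 hend)
      calc wt μ L * f (c * L.prod) ≤ wt μ L * M :=
            mul_le_mul_of_nonneg_left hfM (wt_nonneg hpos L)
        _ = M * (wt μ L * 1) := by ring
    · rw [if_neg hA, if_neg hA]; simp
  have hAW0 : Tendsto (fun n => AW μ W S f c n) atTop (nhds 0) := by
    apply squeeze_zero
    · intro n; exact AW_nonneg hpos (fun g => (hfpos g).le) c n
    · exact hAWle
    · have := hq0.const_mul M
      simpa using this
  have htend : ∀ x ∈ exitF W hS,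
      Tendsto (fun n => ∑ m ∈ Finset.range (n+1), pE μ W S c x m)
        atTop (nhds (exitProb μ S c x)) := by
    intro x hx
    set gx : List G → ℝ := fun L =>
      if (∀ k < L.length, c * (L.take k).prod ∈ S) ∧ c * L.prod = x
      then (L.map μ).prod else 0 with hgx
    have hgx0 : ∀ L, 0 ≤ gx L := by
      intro L
      rw [hgx]
      dsimp only
      split
      · exact wt_nonneg hpos L
      · exact le_rfl
    have hsupp : ∀ L : List G, gx L ≠ 0 → L ∈ listsLen W L.length := by
      intro L hL
      refine mem_listsLen.2 ⟨rfl, fun s hs => ?_⟩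
      by_contra hsW
      have hμs : μ s = 0 := by
        rcases eq_or_lt_of_le (hpos s) with h | h
        · exact h.symm
        · exact absurd ((hW s).2 h) hsW
      have hprod : (L.map μ).prod = 0 :=
        List.prod_eq_zero (hμs ▸ List.mem_map_of_mem (f := μ) hs)
      apply hL
      rw [hgx]
      dsimp only
      split <;> simp [hprod]
    have hpE_eq : ∀ m, pE μ W S c x m = ∑ L ∈ listsLen W m, gx L := fun m => rfl
    have hdisj : (↑(Finset.range (Nat.succ 0)) : Set ℕ) = (↑(Finset.range 1) : Set ℕ) := rfl
    have hbiU : ∀ n : ℕ, ∑ m ∈ Finset.range (n+1), pE μ W S c x m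
        = ∑ L ∈ (Finset.range (n+1)).biUnion (listsLen W), gx L := by
      intro n
      rw [Finset.sum_biUnion]
      · exact Finset.sum_congr rfl fun m _ => hpE_eq m
      · intro i _ j _ hij
        apply Finset.disjoint_left.2
        intro L h1 h2
        exact hij (by rw [← (mem_listsLen.1 h1).1, (mem_listsLen.1 h2).1])
    have hstep : ∀ u : Finset (List G), ∃ n : ℕ,
        ∑ L ∈ u, gx L ≤ ∑ m ∈ Finset.range (n+1), pE μ W S c x m := by
      intro u
      refine ⟨u.sup List.length, ?_⟩
      rw [hbiU]
      calc ∑ L ∈ u, gx L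
          = ∑ L ∈ u.filter (fun L => gx L ≠ 0), gx L := (Finset.sum_filter_ne_zero u).symm
        _ ≤ ∑ L ∈ (Finset.range (u.sup List.length + 1)).biUnion (listsLen W), gx L := by
            apply Finset.sum_le_sum_of_subset_of_nonneg
            · intro L hL
              obtain ⟨hLu, hLne⟩ := Finset.mem_filter.1 hL
              apply Finset.mem_biUnion.2
              exact ⟨L.length, Finset.mem_range.2 (by
                have := Finset.le_sup (f := List.length) hLu; omega), hsupp L hLne⟩
            · intro L _ _; exact hgx0 L
    have hb1 : ∀ u : Finset (List G), ∑ L ∈ u, gx L ≤ 1 := by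
      intro u
      obtain ⟨n, hn⟩ := hstep u
      exact hn.trans (sum_range_pE_le_one hS hpos hsumW hc hx _)
    have hsummable : Summable gx := summable_of_sum_le hgx0 hb1
    have hexit_eq : exitProb μ S c x = ∑' L, gx L := by
      unfold exitProb
      apply tsum_congr
      intro L
      by_cases h : (∀ k < L.length, c * (L.take k).prod ∈ S) ∧ c * L.prod = x <;>
        simp [hgx, h]
    have hSnP_le : ∀ n : ℕ,
        ∑ m ∈ Finset.range (n+1), pE μ W S c x m ≤ exitProb μ S c x := by
      intro n
      rw [hbiU, hexit_eq]
      exact Summable.sum_le_tsum _ (fun L _ => hgx0 L) hsummable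
    have hmono : Monotone (fun n => ∑ m ∈ Finset.range (n+1), pE μ W S c x m) := by
      intro m n hmn
      apply Finset.sum_le_sum_of_subset_of_nonneg
      · exact Finset.range_subset_range.2 (by omega)
      · intro i _ _; exact pE_nonneg hpos c x i
    have hbdd : BddAbove (Set.range (fun n => ∑ m ∈ Finset.range (n+1), pE μ W S c x m)) :=
      ⟨exitProb μ S c x, by rintro _ ⟨n, rfl⟩; exact hSnP_le n⟩
    have h1 := tendsto_atTop_ciSup hmono hbdd
    have h2 : (⨆ n, ∑ m ∈ Finset.range (n+1), pE μ W S c x m) = exitProb μ S c x := by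
      apply le_antisymm (ciSup_le hSnP_le)
      rw [hexit_eq]
      apply Summable.tsum_le_of_sum_le hsummable
      intro u
      obtain ⟨n, hn⟩ := hstep u
      exact hn.trans (le_ciSup hbdd n)
    rwa [h2] at h1
  have hrep : ∀ n : ℕ, f c = AW μ W S f c n +
      ∑ x ∈ exitF W hS, (∑ m ∈ Finset.range (n+1), pE μ W S c x m) * f x := by
    intro n
    rw [rep_n f hharm hc n]
    congr 1
    rw [Finset.sum_congr rfl (fun m _ => EW_eq_sum_pE hS f hc m), Finset.sum_comm]
    apply Finset.sum_congr rfl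
    intro x _
    rw [Finset.sum_mul]
  have hlim : Tendsto (fun n => AW μ W S f c n +
      ∑ x ∈ exitF W hS, (∑ m ∈ Finset.range (n+1), pE μ W S c x m) * f x)
      atTop (nhds (0 + ∑ x ∈ exitF W hS, exitProb μ S c x * f x)) := by
    apply Tendsto.add hAW0
    apply tendsto_finset_sum
    intro x hx
    exact (htend x hx).mul_const (f x)
  have hconst : Tendsto (fun n : ℕ => AW μ W S f c n +
      ∑ x ∈ exitF W hS, (∑ m ∈ Finset.range (n+1), pE μ W S c x m) * f x)
      atTop (nhds (f c)) := by
    have heq : (fun n : ℕ => AW μ W S f c n +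
        ∑ x ∈ exitF W hS, (∑ m ∈ Finset.range (n+1), pE μ W S c x m) * f x)
        = fun _ => f c := funext fun n => (hrep n).symm
    rw [heq]
    exact tendsto_const_nhds
  have := tendsto_nhds_unique hconst hlim
  simpa using this

lemma max_principle (hpos : ∀ s, 0 ≤ μ s) (hW : ∀ s : G, s ∈ W ↔ 0 < μ s)
    (hsumW : ∑ s ∈ W, μ s = 1)
    (hgen : ∀ g : G, ∃ L : List G, (∀ s ∈ L, 0 < μ s) ∧ L.prod = g)
    (f : G → ℝ) (hharm : ∀ g, f g = ∑ s ∈ W, μ s * f (g * s))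
    {c : G} (hmax : ∀ g, f g ≤ f c) : ∀ g, f g = f c := by
  have step : ∀ d : G, (∀ g, f g ≤ f d) → ∀ s : G, 0 < μ s → ∀ g, f g ≤ f (d * s) := by
    intro d hd s hs
    have h1 : ∀ t ∈ W, μ t * f (d * t) ≤ μ t * f d :=
      fun t _ => mul_le_mul_of_nonneg_left (hd _) (hpos t)
    have h2 : ∑ t ∈ W, μ t * f (d * t) = ∑ t ∈ W, μ t * f d := by
      rw [← hharm d, ← Finset.sum_mul, hsumW, one_mul]
    have h3 := (Finset.sum_eq_sum_iff_of_le h1).1 h2 s ((hW s).2 hs)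
    have h4 : f (d * s) = f d := mul_left_cancel₀ (ne_of_gt hs) h3
    intro g; rw [h4]; exact hd g
  have walk : ∀ L : List G, (∀ s ∈ L, 0 < μ s) → ∀ d : G, (∀ g, f g ≤ f d) →
      ∀ g, f g ≤ f (d * L.prod) := by
    intro L
    induction L with
    | nil => intro _ d hd g; simpa using hd g
    | cons s t ih =>
      intro hmem d hd
      have h1 := step d hd s (hmem s (List.mem_cons_self))
      have h2 := ih (fun u hu => hmem u (List.mem_cons_of_mem _ hu)) (d * s) h1
      intro g
      have h3 := h2 g
      rwa [List.prod_cons, ← mul_assoc]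
  intro g
  obtain ⟨L, hL, hLp⟩ := hgen (c⁻¹ * g)
  have h2 : c * L.prod = g := by rw [hLp, mul_inv_cancel_left]
  refine le_antisymm (hmax g) ?_
  have h3 := walk L hL c hmax c
  rwa [h2] at h3

lemma ratio_bddAbove (μ : G → ℝ) (S : Set G) (hS : S.Finite)
    (hfin : (Function.support μ).Finite) (a b : G) :
    BddAbove {r : ℝ | ∃ x ∈ bdry μ S, 0 < exitProb μ S a x ∧
      r = |exitProb μ S a x - exitProb μ S b x| / exitProb μ S a x} := by
  have h1 : (bdry μ S).Finite := by
    apply Set.Finite.subset (((hS.prod hfin)).image (fun p => p.1 * p.2))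
    rintro x ⟨hxS, y, hy, hμ⟩
    exact ⟨(y, y⁻¹ * x), Set.mem_prod.2 ⟨hy, ne_of_gt hμ⟩, mul_inv_cancel_left y x⟩
  have h2 : {r : ℝ | ∃ x ∈ bdry μ S, 0 < exitProb μ S a x ∧
      r = |exitProb μ S a x - exitProb μ S b x| / exitProb μ S a x}.Finite := by
    apply Set.Finite.subset (h1.image
      (fun x => |exitProb μ S a x - exitProb μ S b x| / exitProb μ S a x))
    rintro r ⟨x, hx, _, rfl⟩
    exact ⟨x, hx, rfl⟩
  exact h2.bddAbove

lemma exitProb_nonneg (hpos : ∀ s, 0 ≤ μ s) (S : Set G) (c x : G) :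
    0 ≤ exitProb μ S c x := by
  apply tsum_nonneg
  intro L
  split
  · exact wt_nonneg hpos L
  · exact le_rfl

lemma exitF_mem_bdry {hS : S.Finite} (hW : ∀ s : G, s ∈ W ↔ 0 < μ s) {x : G}
    (hx : x ∈ exitF W hS) : x ∈ bdry μ S := by
  unfold exitF at hx
  obtain ⟨himg, hnot⟩ := Finset.mem_sdiff.1 hx
  obtain ⟨⟨y, s⟩, hys, rfl⟩ := Finset.mem_image.1 himg
  obtain ⟨hy, hs⟩ := Finset.mem_product.1 hys
  refine ⟨by simpa [Set.Finite.mem_toFinset] using hnot, y, ?_, ?_⟩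
  · exact (Set.Finite.mem_toFinset hS).1 hy
  · rw [inv_mul_cancel_left]
    exact (hW s).1 hs
end Aux

/-- If for every pair `a, b ∈ G` one has `ε(S; a, b) → 0` as `S → G`, then every
positive `μ`-harmonic function on `G` is constant. -/
theorem eps_tendsto_zero_implies_positive_harmonic_constant
    {G : Type*} [Group G] [Countable G] (μ : G → ℝ)
    (hpos : ∀ s : G, 0 ≤ μ s) (hfin : (Function.support μ).Finite)
    (hsum : ∑ᶠ s : G, μ s = 1)
    (hgen : ∀ g : G, ∃ L : List G, (∀ s ∈ L, 0 < μ s) ∧ L.prod = g)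
    (heps : ∀ a b : G, ∀ ε : ℝ, 0 < ε → ∃ F : Set G, F.Finite ∧
      ∀ S : Set G, S.Finite → F ∪ {a, b} ⊆ S → epsRatio μ S a b < ε) :
    ∀ f : G → ℝ, IsMuHarmonic μ f → (∀ g : G, 0 < f g) → ∀ a b : G, f a = f b := by
  classical
  intro f hf hfpos a b
  set W : Finset G := hfin.toFinset with hWdef
  have hW : ∀ s : G, s ∈ W ↔ 0 < μ s := by
    intro s
    rw [hWdef, Set.Finite.mem_toFinset, Function.mem_support]
    exact ⟨fun h => (hpos s).lt_of_ne (Ne.symm h), fun h => ne_of_gt h⟩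
  have hsumW : ∑ s ∈ W, μ s = 1 := by rw [← hsum]; exact (finsum_eq_sum μ hfin).symm
  have hharm : ∀ g, f g = ∑ s ∈ W, μ s * f (g * s) := by
    intro g
    rw [hf g]
    apply finsum_eq_sum_of_support_subset
    intro s hs
    have : μ s ≠ 0 := by
      intro h0
      apply hs
      simp [h0]
    simpa [hWdef, Set.Finite.mem_toFinset] using this
  suffices key : ∀ ε : ℝ, 0 < ε → |f a - f b| ≤ ε * f a by
    have h0 : ∀ ε : ℝ, 0 < ε → |f a - f b| ≤ ε := by
      intro ε hε
      have h2 := key (ε / f a) (div_pos hε (hfpos a))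
      rwa [div_mul_cancel₀ ε (ne_of_gt (hfpos a))] at h2
    have h1 : |f a - f b| ≤ 0 := by
      apply le_of_forall_pos_le_add
      intro ε hε
      simpa using h0 ε hε
    have := abs_nonpos_iff.1 h1
    linarith [sub_eq_zero.1 this]
  intro ε hε
  set ε' := min ε (1/2) with hε'def
  have hε'pos : 0 < ε' := lt_min hε (by norm_num)
  obtain ⟨F1, hF1fin, hF1⟩ := heps a b ε' hε'pos
  obtain ⟨F2, hF2fin, hF2⟩ := heps b a ε' hε'pos
  set S : Set G := F1 ∪ F2 ∪ {a, b} with hSdef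
  have hS : S.Finite := (hF1fin.union hF2fin).union ((Set.finite_singleton b).insert a)
  have ha : a ∈ S := by rw [hSdef]; right; left; rfl
  have hb : b ∈ S := by rw [hSdef]; right; right; rfl
  have hra : epsRatio μ S a b < ε' := by
    apply hF1 S hS
    rw [hSdef]
    apply Set.union_subset
    · exact (Set.subset_union_left.trans Set.subset_union_left)
    · exact Set.subset_union_right
  have hrb : epsRatio μ S b a < ε' := by
    apply hF2 S hS
    rw [hSdef]
    apply Set.union_subset
    · exact (Set.subset_union_right.trans Set.subset_union_left)
    · rw [Set.pair_comm b a]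
      exact Set.subset_union_right
  have hε'le : ε' ≤ ε := min_le_left _ _
  have hε'half : ε' ≤ 1/2 := min_le_right _ _
  by_cases hcase : ∃ g0 : G, g0 ∉ S
  · obtain ⟨g0, hg0⟩ := hcase
    have hesc := exists_escape (μ := μ) (W := W) hS hpos hW hsumW hgen hg0 ha
    have repa := rep_formula (μ := μ) (W := W) hS hpos hW hsumW f hharm hfpos hesc ha
    have repb := rep_formula (μ := μ) (W := W) hS hpos hW hsumW f hharm hfpos hesc hb
    have hbdx : ∀ x ∈ exitF W hS, |exitProb μ S a x - exitProb μ S b x| ≤ ε' * exitProb μ S a x := by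
      intro x hx
      have hxb : x ∈ bdry μ S := exitF_mem_bdry hW hx
      have hpa0 : 0 ≤ exitProb μ S a x := exitProb_nonneg hpos S a x
      rcases eq_or_lt_of_le hpa0 with hpa | hpa
      · have hpb : exitProb μ S b x = 0 := by
          by_contra hne
          have hpb0 : 0 < exitProb μ S b x :=
            (exitProb_nonneg hpos S b x).lt_of_ne (Ne.symm hne)
          have hmem : |exitProb μ S b x - exitProb μ S a x| / exitProb μ S b x ∈
              {r : ℝ | ∃ x ∈ bdry μ S, 0 < exitProb μ S b x ∧
                r = |exitProb μ S b x - exitProb μ S a x| / exitProb μ S b x} := by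
            exact ⟨x, hxb, hpb0, rfl⟩
          have hle : |exitProb μ S b x - exitProb μ S a x| / exitProb μ S b x ≤ epsRatio μ S b a :=
            le_csSup (ratio_bddAbove μ S hS hfin b a) hmem
          rw [← hpa, sub_zero, abs_of_pos hpb0, div_self (ne_of_gt hpb0)] at hle
          have : epsRatio μ S b a < 1/2 := lt_of_lt_of_le hrb hε'half
          linarith
        rw [← hpa, hpb]
        simp
      · have hmem : |exitProb μ S a x - exitProb μ S b x| / exitProb μ S a x ∈
            {r : ℝ | ∃ x ∈ bdry μ S, 0 < exitProb μ S a x ∧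
              r = |exitProb μ S a x - exitProb μ S b x| / exitProb μ S a x} :=
          ⟨x, hxb, hpa, rfl⟩
        have hle : |exitProb μ S a x - exitProb μ S b x| / exitProb μ S a x ≤ epsRatio μ S a b :=
          le_csSup (ratio_bddAbove μ S hS hfin a b) hmem
        have h2 : |exitProb μ S a x - exitProb μ S b x| / exitProb μ S a x < ε' :=
          lt_of_le_of_lt hle hra
        rw [div_lt_iff₀ hpa] at h2
        linarith
    have hfinal : |f a - f b| ≤ ε' * f a := by
      calc |f a - f b|
          = |∑ x ∈ exitF W hS, (exitProb μ S a x - exitProb μ S b x) * f x| := by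
            rw [repa, repb, ← Finset.sum_sub_distrib]
            congr 1
            apply Finset.sum_congr rfl
            intro x _
            ring
        _ ≤ ∑ x ∈ exitF W hS, |(exitProb μ S a x - exitProb μ S b x) * f x| :=
            Finset.abs_sum_le_sum_abs _ _
        _ ≤ ∑ x ∈ exitF W hS, ε' * (exitProb μ S a x * f x) := by
            apply Finset.sum_le_sum
            intro x hx
            rw [abs_mul, abs_of_pos (hfpos x)]
            calc |exitProb μ S a x - exitProb μ S b x| * f x
                ≤ (ε' * exitProb μ S a x) * f x :=
                  mul_le_mul_of_nonneg_right (hbdx x hx) (hfpos x).le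
              _ = ε' * (exitProb μ S a x * f x) := by ring
        _ = ε' * f a := by rw [← Finset.mul_sum, ← repa]
    calc |f a - f b| ≤ ε' * f a := hfinal
      _ ≤ ε * f a := mul_le_mul_of_nonneg_right hε'le (hfpos a).le
  · push_neg at hcase
    have hfinG : (Set.univ : Set G).Finite := by
      rw [Set.eq_univ_of_forall hcase] at hS
      exact hS
    have : Finite G := Set.finite_univ_iff.1 hfinG
    have : Fintype G := Fintype.ofFinite G
    obtain ⟨c, _, hcmax⟩ := Finset.exists_max_image (Finset.univ : Finset G) f
      ⟨a, Finset.mem_univ a⟩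
    have hmax : ∀ g, f g ≤ f c := fun g => hcmax g (Finset.mem_univ g)
    have hconst := max_principle (μ := μ) (W := W) hpos hW hsumW hgen f hharm hmax
    rw [hconst a, hconst b]
    simp only [sub_self, abs_zero]
    exact mul_nonneg hε.le (hfpos c).le
end

section
/- Let S ⊆ G be finite, let v, w ∈ S, and suppose there is a path v = v_0, v_1, …, v_k = w with v_i ∈ S for all 0 ≤ i ≤ k and μ(v_i⁻¹·v_{i+1}) > 0 for all 0 ≤ i < k; set p = ∏_{i=0}^{k−1} μ(v_i⁻¹·v_{i+1}) > 0. Then for every x ∈ ∂S one has μ_S(v,x) ≥ p·μ_S(w,x). -/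
section AuxExit
open Classical

set_option linter.unusedSectionVars false

variable {G : Type*} [Group G]

private lemma weight_nonneg (μ : G → ℝ) (hpos : ∀ s : G, 0 ≤ μ s) (L : List G) :
    0 ≤ (L.map μ).prod := by
  induction L with
  | nil => simp
  | cons a l ih =>
    simp only [List.map_cons, List.prod_cons]
    exact mul_nonneg (hpos a) ih

private lemma list_prod_range {M : Type*} [CommMonoid M] (f : ℕ → M) :
    ∀ n : ℕ, ((List.range n).map f).prod = ∏ i ∈ Finset.range n, f i
  | 0 => by simp
  | n + 1 => by
      rw [List.range_succ, List.map_append, List.prod_append,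
        Finset.prod_range_succ, list_prod_range f n]
      simp

noncomputable def lamN (T : Finset G) : ℕ → Finset (List G)
  | 0 => {([] : List G)}
  | n + 1 => T.biUnion fun s => (lamN T n).image fun L => s :: L

lemma mem_lamN (T : Finset G) : ∀ (n : ℕ) (M : List G),
    M ∈ lamN T n ↔ M.length = n ∧ ∀ s ∈ M, s ∈ T
  | 0, M => by
    simp only [lamN, Finset.mem_singleton]
    constructor
    · rintro rfl; simp
    · rintro ⟨h, -⟩; exact List.length_eq_zero_iff.mp h
  | n + 1, M => by
    simp only [lamN, Finset.mem_biUnion, Finset.mem_image]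
    constructor
    · rintro ⟨s, hs, L, hL, rfl⟩
      obtain ⟨h1, h2⟩ := (mem_lamN T n L).1 hL
      refine ⟨by simp [h1], ?_⟩
      intro t ht
      rcases List.mem_cons.1 ht with rfl | ht
      · exact hs
      · exact h2 t ht
    · rintro ⟨h1, h2⟩
      cases M with
      | nil => simp at h1
      | cons s L =>
        exact ⟨s, h2 s (by simp), L,
          (mem_lamN T n L).2 ⟨by simpa using h1,
            fun t ht => h2 t (List.mem_cons_of_mem _ ht)⟩, rfl⟩

lemma sum_lamN (μ : G → ℝ) (T : Finset G) (hT : ∑ s ∈ T, μ s = 1) :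
    ∀ n : ℕ, ∑ M ∈ lamN T n, (M.map μ).prod = 1
  | 0 => by simp [lamN]
  | n + 1 => by
    rw [lamN, Finset.sum_biUnion]
    · have h1 : ∀ s ∈ T,
          ∑ M ∈ (lamN T n).image (fun L => s :: L), (M.map μ).prod = μ s := by
        intro s hs
        rw [Finset.sum_image (fun a _ b _ h => by injection h)]
        simp only [List.map_cons, List.prod_cons]
        rw [← Finset.mul_sum, sum_lamN μ T hT n, mul_one]
      rw [Finset.sum_congr rfl h1, hT]
    · intro s hs t ht hst
      apply Finset.disjoint_left.2
      rintro M hM hM'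
      simp only [Finset.mem_image] at hM hM'
      obtain ⟨L, -, rfl⟩ := hM
      obtain ⟨L', -, h⟩ := hM'
      exact hst (by injection h.symm)

lemma exit_summable (μ : G → ℝ) (hpos : ∀ s : G, 0 ≤ μ s)
    (hfin : (Function.support μ).Finite) (hsum : ∑ᶠ s : G, μ s = 1)
    (S : Set G) (x : G) (hxS : x ∉ S) (a : G) :
    Summable (fun L : List G =>
      if (∀ k < L.length, a * (L.take k).prod ∈ S) ∧ a * L.prod = x
      then (L.map μ).prod else 0) := by
  set T := hfin.toFinset with hTdef
  have hT : ∑ s ∈ T, μ s = 1 := by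
    rw [← hsum, finsum_eq_sum μ hfin]
  set g : List G → ℝ := fun L =>
    if (∀ k < L.length, a * (L.take k).prod ∈ S) ∧ a * L.prod = x
      then (L.map μ).prod else 0 with hg
  have hgnn : ∀ L, 0 ≤ g L := by
    intro L
    rw [hg]
    dsimp only
    split
    · exact weight_nonneg μ hpos L
    · exact le_refl 0
  apply summable_of_sum_le (c := (1 : ℝ)) hgnn
  intro u
  set N := u.sup List.length with hN
  set u' := u.filter (fun L => g L ≠ 0) with hu'
  have hcond : ∀ L ∈ u',
      ((∀ k < L.length, a * (L.take k).prod ∈ S) ∧ a * L.prod = x) := by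
    intro L hL
    have : g L ≠ 0 := (Finset.mem_filter.1 hL).2
    by_contra h
    exact this (if_neg h)
  have hglval : ∀ L ∈ u', g L = (L.map μ).prod := fun L hL => if_pos (hcond L hL)
  have hmemT : ∀ L ∈ u', ∀ s ∈ L, s ∈ T := by
    intro L hL s hs
    have hne : g L ≠ 0 := (Finset.mem_filter.1 hL).2
    rw [hglval L hL] at hne
    by_contra hsT
    have : μ s = 0 := by
      by_contra hμ
      exact hsT (by simp [hTdef, Function.mem_support, hμ])
    exact hne (List.prod_eq_zero (by simpa [this] using List.mem_map_of_mem (f := μ) hs))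
  have hlen : ∀ L ∈ u', L.length ≤ N :=
    fun L hL => Finset.le_sup (Finset.mem_of_mem_filter L hL)
  have hkey : ∀ L ∈ u',
      g L = ∑ M ∈ (lamN T (N - L.length)).image (fun M => L ++ M), (M.map μ).prod := by
    intro L hL
    rw [Finset.sum_image (fun a _ b _ h => List.append_cancel_left h)]
    have : ∀ M ∈ lamN T (N - L.length),
        ((L ++ M).map μ).prod = (L.map μ).prod * (M.map μ).prod := by
      intro M _
      rw [List.map_append, List.prod_append]
    rw [Finset.sum_congr rfl this, ← Finset.mul_sum,
      sum_lamN μ T hT (N - L.length), mul_one, hglval L hL]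
  have hpref : ∀ L ∈ u', ∀ L' ∈ u', L <+: L' → L = L' := by
    intro L hL L' hL' hp
    rcases eq_or_lt_of_le hp.length_le with heq | hlt
    · exact hp.eq_of_length heq
    · exfalso
      have h1 : a * (L'.take L.length).prod ∈ S := (hcond L' hL').1 _ hlt
      rw [← List.prefix_iff_eq_take.mp hp] at h1
      rw [(hcond L hL).2] at h1
      exact hxS h1
  calc ∑ L ∈ u, g L = ∑ L ∈ u', g L := (Finset.sum_filter_ne_zero u).symm
    _ = ∑ L ∈ u', ∑ M ∈ (lamN T (N - L.length)).image (fun M => L ++ M),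
          (M.map μ).prod := Finset.sum_congr rfl hkey
    _ = ∑ M ∈ u'.biUnion (fun L => (lamN T (N - L.length)).image (fun M => L ++ M)),
          (M.map μ).prod := by
        rw [Finset.sum_biUnion]
        intro L hL L' hL' hne
        apply Finset.disjoint_left.2
        rintro M' hM hM'
        simp only [Finset.mem_image] at hM hM'
        obtain ⟨M, hMmem, rfl⟩ := hM
        obtain ⟨M2, hM2mem, hEq⟩ := hM'
        have p1 : L <+: L ++ M := List.prefix_append L M
        have p2 : L' <+: L ++ M := hEq ▸ List.prefix_append L' M2
        rcases List.prefix_or_prefix_of_prefix p1 p2 with h | h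
        · exact hne (hpref L hL L' hL' h)
        · exact hne (hpref L' hL' L hL h).symm
    _ ≤ ∑ M ∈ lamN T N, (M.map μ).prod := by
        apply Finset.sum_le_sum_of_subset_of_nonneg
        · intro M' hM'
          simp only [Finset.mem_biUnion, Finset.mem_image] at hM'
          obtain ⟨L, hL, M, hM, rfl⟩ := hM'
          obtain ⟨hMl, hMT⟩ := (mem_lamN T _ M).1 hM
          refine (mem_lamN T N _).2 ⟨?_, ?_⟩
          · rw [List.length_append, hMl]
            have := hlen L hL
            omega
          · intro s hs
            rcases List.mem_append.1 hs with h | h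
            · exact hmemT L hL s h
            · exact hMT s h
        · intro M _ _
          exact weight_nonneg μ hpos M
    _ = 1 := sum_lamN μ T hT N

end AuxExit

/-- If there is a positive-probability path from `v` to `w` inside `S` of total weight
`p`, then `μ_S(v,x) ≥ p · μ_S(w,x)` for every boundary point `x ∈ ∂S`. -/
theorem exitProb_ge_of_path
    {G : Type*} [Group G] [Countable G] (μ : G → ℝ)
    (hpos : ∀ s : G, 0 ≤ μ s) (hfin : (Function.support μ).Finite)
    (hsum : ∑ᶠ s : G, μ s = 1)
    (hgen : ∀ g : G, ∃ L : List G, (∀ s ∈ L, 0 < μ s) ∧ L.prod = g)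
    (S : Set G) (hS : S.Finite) (v w : G) (γ : ℕ → G) (k : ℕ)
    (hγ0 : γ 0 = v) (hγk : γ k = w)
    (hin : ∀ i ≤ k, γ i ∈ S)
    (hstep : ∀ i < k, 0 < μ ((γ i)⁻¹ * γ (i + 1)))
    (p : ℝ) (hp : p = ∏ i ∈ Finset.range k, μ ((γ i)⁻¹ * γ (i + 1)))
    (x : G) (hx : x ∈ bdry μ S) :
    p * exitProb μ S w x ≤ exitProb μ S v x := by
  classical
  obtain ⟨hxnS, -⟩ := hx
  set step : ℕ → G := fun j => (γ j)⁻¹ * γ (j + 1) with hstepdef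
  set P : List G := (List.range k).map step with hPdef
  have htel : ∀ m : ℕ, γ 0 * ((List.range m).map step).prod = γ m := by
    intro m
    induction m with
    | zero => simp
    | succ m ih =>
      rw [List.range_succ, List.map_append, List.prod_append, ← mul_assoc, ih]
      simp [hstepdef, ← mul_assoc]
  have hPlen : P.length = k := by simp [hPdef]
  have hPprod : v * P.prod = w := by
    rw [hPdef, ← hγ0, ← hγk]; exact htel k
  have hptake : ∀ j ≤ k, v * (P.take j).prod = γ j := by
    intro j hj
    rw [hPdef, ← List.map_take, List.take_range, min_eq_left hj, ← hγ0]
    exact htel j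
  have hpweight : (P.map μ).prod = p := by
    rw [hp, hPdef, List.map_map]
    exact list_prod_range (μ ∘ step) k
  have hpnn : 0 ≤ p := by
    rw [hp]; exact Finset.prod_nonneg fun i _ => hpos _
  -- abbreviations
  set f : List G → ℝ := fun L =>
    if (∀ j < L.length, w * (L.take j).prod ∈ S) ∧ w * L.prod = x
      then (L.map μ).prod else 0 with hf
  set g : List G → ℝ := fun L =>
    if (∀ j < L.length, v * (L.take j).prod ∈ S) ∧ v * L.prod = x
      then (L.map μ).prod else 0 with hg
  have hgnn : ∀ L, 0 ≤ g L := by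
    intro L
    rw [hg]; dsimp only
    split
    · exact weight_nonneg μ hpos L
    · exact le_refl 0
  have hEP : exitProb μ S v x = ∑' L, g L := rfl
  have hEPw : exitProb μ S w x = ∑' L, f L := rfl
  have hmain : ∀ L : List G, p * f L ≤ g (P ++ L) := by
    intro L
    by_cases hc : (∀ j < L.length, w * (L.take j).prod ∈ S) ∧ w * L.prod = x
    · have hcv : (∀ j < (P ++ L).length, v * ((P ++ L).take j).prod ∈ S) ∧
          v * (P ++ L).prod = x := by
        constructor
        · intro j hj
          rw [List.take_append, List.prod_append, ← mul_assoc]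
          by_cases hjk : j ≤ k
          · have h0 : j - P.length = 0 := by omega
            rw [h0]
            simp only [List.take_zero, List.prod_nil, mul_one]
            rw [hptake j hjk]
            exact hin j hjk
          · push_neg at hjk
            have htP : P.take j = P := List.take_of_length_le (by omega)
            rw [htP, hPprod]
            have : j - P.length < L.length := by
              rw [List.length_append] at hj
              omega
            exact hc.1 _ this
        · rw [List.prod_append, ← mul_assoc, hPprod]
          exact hc.2
      rw [hf, hg]
      dsimp only
      rw [if_pos hc, if_pos hcv, List.map_append, List.prod_append, hpweight]
    · rw [hf]
      dsimp only
      rw [if_neg hc, mul_zero]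
      exact hgnn (P ++ L)
  rw [hEP, hEPw, ← tsum_mul_left]
  by_cases hfs : Summable f
  · refine (hfs.mul_left p).tsum_le_tsum_of_inj (fun L => P ++ L)
      (fun L L' h => List.append_cancel_left h)
      (fun c _ => hgnn c) hmain ?_
    exact exit_summable μ hpos hfin hsum S x hxnS v
  · have h0 : ∑' (L : List G), p * f L = 0 := by
      rcases eq_or_ne p 0 with rfl | hp0
      · simp
      · apply tsum_eq_zero_of_not_summable
        intro hsm
        have h2 := hsm.mul_left p⁻¹
        simp only [← mul_assoc, inv_mul_cancel₀ hp0, one_mul] at h2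
        exact hfs h2
    rw [h0]
    exact tsum_nonneg hgnn
end

section
/- Let e be the identity of G, let δ ∈ (0,1), let r_0 ∈ ℕ, and suppose that ε(B(e,s); e, b) ≤ δ for every natural number s > r_0 and every b ∈ supp(μ). Then there exists a constant C > 0 such that for every r ∈ ℕ, the directed sphere satisfies |{x ∈ G : d(e,x) = r}| ≤ C·(1−δ)^{−r}. -/
open Classical

section Kraft
variable {ι : Type*} (μ : ι → ℝ)

lemma prod_map_nonneg (hpos : ∀ s, 0 ≤ μ s) (L : List ι) : 0 ≤ (L.map μ).prod :=
  List.prod_nonneg (by simp only [List.mem_map]; rintro a ⟨s, -, rfl⟩; exact hpos s)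

lemma pow_le_prod_map {m : ℝ} (hm : 0 ≤ m) (hpos : ∀ s, 0 ≤ μ s) :
    ∀ L : List ι, (∀ s ∈ L, m ≤ μ s) → m ^ L.length ≤ (L.map μ).prod := by
  intro L
  induction L with
  | nil => simp
  | cons a T ih =>
      intro h
      simp only [List.map_cons, List.prod_cons, List.length_cons, pow_succ']
      exact mul_le_mul (h a (by simp)) (ih fun s hs => h s (by simp [hs]))
        (pow_nonneg hm _) ((hm.trans (h a (by simp))))

lemma sum_mu_le_one (hpos : ∀ s, 0 ≤ μ s) (hfin : (Function.support μ).Finite)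
    (hsum : ∑ᶠ s, μ s = 1) (F : Finset ι) : ∑ s ∈ F, μ s ≤ 1 := by
  have h1 : ∑ s ∈ hfin.toFinset, μ s = 1 := by rw [← finsum_eq_sum μ hfin, hsum]
  calc ∑ s ∈ F, μ s = ∑ s ∈ F ∩ hfin.toFinset, μ s := by
        refine (Finset.sum_subset (Finset.inter_subset_left) ?_).symm
        intro x hx hx'
        by_contra h
        exact hx' (Finset.mem_inter.2 ⟨hx, hfin.mem_toFinset.2 h⟩)
    _ ≤ ∑ s ∈ hfin.toFinset, μ s :=
        Finset.sum_le_sum_of_subset_of_nonneg (Finset.inter_subset_right)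
          (fun i _ _ => hpos i)
    _ = 1 := h1

lemma kraft_aux [Inhabited ι] (hpos : ∀ s, 0 ≤ μ s) (hfin : (Function.support μ).Finite)
    (hsum : ∑ᶠ s, μ s = 1) :
    ∀ n : ℕ, ∀ F : Finset (List ι), (∀ L ∈ F, L.length ≤ n) →
      (∀ L ∈ F, ∀ L' ∈ F, L ≠ L' → ¬ L <+: L') →
      ∑ L ∈ F, (L.map μ).prod ≤ 1 := by
  intro n
  induction n with
  | zero =>
      intro F hlen _
      have hF : F ⊆ {([] : List ι)} := by
        intro L hL
        simp only [Finset.mem_singleton]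
        exact List.length_eq_zero_iff.1 (Nat.le_zero.1 (hlen L hL))
      rcases Finset.subset_singleton_iff.1 hF with h | h <;> simp [h]
  | succ n ih =>
      intro F hlen hpf
      by_cases h0 : ([] : List ι) ∈ F
      · have hF : F ⊆ {([] : List ι)} := by
          intro L hL
          simp only [Finset.mem_singleton]
          by_contra hne
          exact hpf [] h0 L hL (Ne.symm hne) (List.nil_prefix)
        rcases Finset.subset_singleton_iff.1 hF with h | h <;> simp [h]
      · have hne : ∀ L ∈ F, L ≠ [] := fun L hL h => h0 (h ▸ hL)
        have hcons : ∀ L ∈ F, L.headI :: L.tail = L := fun L hL =>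
          List.cons_head!_tail (hne L hL)
        rw [← Finset.sum_fiberwise_of_maps_to (t := F.image List.headI)
          (g := List.headI) (fun L hL => Finset.mem_image_of_mem _ hL)]
        have key : ∀ s ∈ F.image List.headI,
            ∑ L ∈ F.filter (fun L => L.headI = s), (L.map μ).prod ≤ μ s := by
          intro s _
          have hfil : ∀ L ∈ F.filter (fun L => L.headI = s), L = s :: L.tail := by
            intro L hL
            rcases Finset.mem_filter.1 hL with ⟨hLF, hLh⟩
            conv_lhs => rw [← hcons L hLF]
            rw [hLh]
          calc ∑ L ∈ F.filter (fun L => L.headI = s), (L.map μ).prod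
              = ∑ L ∈ F.filter (fun L => L.headI = s), μ s * ((L.tail.map μ).prod) := by
                refine Finset.sum_congr rfl fun L hL => ?_
                conv_lhs => rw [hfil L hL]
                simp
            _ = μ s * ∑ T ∈ (F.filter (fun L => L.headI = s)).image List.tail,
                  (T.map μ).prod := by
                rw [← Finset.mul_sum]
                congr 1
                rw [Finset.sum_image]
                intro L hL L' hL' htail
                rw [← hcons L (Finset.mem_filter.1 hL).1, ← hcons L' (Finset.mem_filter.1 hL').1,
                  (Finset.mem_filter.1 hL).2, (Finset.mem_filter.1 hL').2, htail]
            _ ≤ μ s * 1 := by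
                refine mul_le_mul_of_nonneg_left ?_ (hpos s)
                refine ih _ ?_ ?_
                · intro T hT
                  rcases Finset.mem_image.1 hT with ⟨L, hL, rfl⟩
                  have := hlen L (Finset.mem_filter.1 hL).1
                  have h2 : L.tail.length = L.length - 1 := List.length_tail
                  omega
                · intro T hT T' hT' hTne hTpf
                  rcases Finset.mem_image.1 hT with ⟨L, hL, rfl⟩
                  rcases Finset.mem_image.1 hT' with ⟨L', hL', rfl⟩
                  have hLe : L = s :: L.tail := hfil L hL
                  have hLe' : L' = s :: L'.tail := hfil L' hL'
                  have hne2 : L ≠ L' := by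
                    intro h; exact hTne (by rw [h])
                  refine hpf L (Finset.mem_filter.1 hL).1 L' (Finset.mem_filter.1 hL').1 hne2 ?_
                  rw [hLe, hLe']
                  exact List.cons_prefix_cons.2 ⟨rfl, hTpf⟩
            _ = μ s := mul_one _
        calc ∑ s ∈ F.image List.headI, ∑ L ∈ F.filter (fun L => L.headI = s), (L.map μ).prod
            ≤ ∑ s ∈ F.image List.headI, μ s := Finset.sum_le_sum key
          _ ≤ 1 := sum_mu_le_one μ hpos hfin hsum _

lemma kraft_summable [Inhabited ι] (hpos : ∀ s, 0 ≤ μ s) (hfin : (Function.support μ).Finite)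
    (hsum : ∑ᶠ s, μ s = 1) (P : List ι → Prop)
    (hP : ∀ L L', P L → P L' → L ≠ L' → ¬ L <+: L') :
    Summable (fun L => if P L then (L.map μ).prod else 0) ∧
      ∑' L, (if P L then (L.map μ).prod else 0) ≤ 1 := by
  have hnn : ∀ L, 0 ≤ (if P L then (L.map μ).prod else 0) := by
    intro L; split
    · exact prod_map_nonneg μ hpos L
    · exact le_refl 0
  have hbdd : ∀ u : Finset (List ι), ∑ L ∈ u, (if P L then (L.map μ).prod else 0) ≤ 1 := by
    intro u
    rw [← Finset.sum_filter]
    refine kraft_aux μ hpos hfin hsum ((u.filter P).sup List.length) _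
      (fun L hL => Finset.le_sup hL) ?_
    intro L hL L' hL' hne
    exact hP L L' (Finset.mem_filter.1 hL).2 (Finset.mem_filter.1 hL').2 hne
  have hs := summable_of_sum_le hnn hbdd
  exact ⟨hs, Summable.tsum_le_of_sum_le hs hbdd⟩

end Kraft



open Classical

def EP {G : Type*} [Group G] (S : Set G) (a x : G) (L : List G) : Prop :=
  (∀ k < L.length, a * (L.take k).prod ∈ S) ∧ a * L.prod = x

lemma exitProb_eq {G : Type*} [Group G] (μ : G → ℝ) (S : Set G) (a x : G) :
    exitProb μ S a x = ∑' L : List G, if EP S a x L then (L.map μ).prod else 0 := by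
  rw [exitProb]
  exact tsum_congr fun L => by
    by_cases h : EP S a x L
    · rw [if_pos (show (∀ k < L.length, a * (L.take k).prod ∈ S) ∧ a * L.prod = x from h), if_pos h]
    · rw [if_neg (show ¬((∀ k < L.length, a * (L.take k).prod ∈ S) ∧ a * L.prod = x) from h), if_neg h]

lemma EP_prefixFree {G : Type*} [Group G] {S : Set G} {a x : G} (hx : x ∉ S) :
    ∀ L L', EP S a x L → EP S a x L' → L ≠ L' → ¬ L <+: L' := by
  rintro L L' ⟨h1, h2⟩ ⟨h1', h2'⟩ hne hpf
  have hlt : L.length < L'.length := by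
    rcases Nat.lt_or_ge L.length L'.length with h | h
    · exact h
    · exact absurd (hpf.eq_of_length (le_antisymm hpf.length_le h)) hne
  have : L'.take L.length = L := (List.prefix_iff_eq_take.1 hpf).symm
  have hmem := h1' L.length hlt
  rw [this, h2] at hmem
  exact hx hmem

section ExitLemmas

variable {G : Type*} [Group G] {μ : G → ℝ} {S T : Set G} {a x : G}
variable (hpos : ∀ s : G, 0 ≤ μ s) (hfin : (Function.support μ).Finite)
  (hsum : ∑ᶠ s : G, μ s = 1)

include hpos hfin hsum

lemma summable_EP (hx : x ∉ S) :
    Summable (fun L : List G => if EP S a x L then (L.map μ).prod else 0) :=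
  (@kraft_summable G μ ⟨1⟩ hpos hfin hsum _ (EP_prefixFree hx)).1

lemma exitProb_le_one (hx : x ∉ S) : exitProb μ S a x ≤ 1 := by
  rw [exitProb_eq]
  exact (@kraft_summable G μ ⟨1⟩ hpos hfin hsum _ (EP_prefixFree hx)).2

omit hfin hsum in
lemma exitProb_nonneg_s11 : 0 ≤ exitProb μ S a x := by
  rw [exitProb_eq]
  refine tsum_nonneg fun L => ?_
  split
  · exact prod_map_nonneg μ hpos L
  · exact le_refl 0

lemma le_exitProb (hx : x ∉ S) {L : List G} (hL : EP S a x L) :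
    (L.map μ).prod ≤ exitProb μ S a x := by
  rw [exitProb_eq]
  have := Summable.le_tsum (summable_EP (a := a) hpos hfin hsum hx) L (fun L' _ => by
    split
    · exact prod_map_nonneg μ hpos L'
    · exact le_refl 0)
  simpa [if_pos hL] using this

lemma exitProb_mono (hST : S ⊆ T) (hx : x ∉ T) :
    exitProb μ S a x ≤ exitProb μ T a x := by
  rw [exitProb_eq, exitProb_eq]
  refine Summable.tsum_le_tsum (fun L => ?_) (summable_EP hpos hfin hsum (fun h => hx (hST h)))
    (summable_EP hpos hfin hsum hx)
  by_cases h : EP S a x L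
  · rw [if_pos h, if_pos ⟨fun k hk => hST (h.1 k hk), h.2⟩]
  · rw [if_neg h]
    split
    · exact prod_map_nonneg μ hpos L
    · exact le_refl 0

omit hpos hfin hsum in
lemma exitProb_translate (b : G) :
    exitProb μ S b x = exitProb μ {g | b * g ∈ S} 1 (b⁻¹ * x) := by
  rw [exitProb_eq, exitProb_eq]
  refine tsum_congr fun L => ?_
  have hiff : EP S b x L ↔ EP {g | b * g ∈ S} 1 (b⁻¹ * x) L := by
    constructor
    · rintro ⟨h1, h2⟩
      exact ⟨fun k hk => by simpa using h1 k hk, by rw [one_mul, ← h2]; group⟩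
    · rintro ⟨h1, h2⟩
      refine ⟨fun k hk => by simpa using h1 k hk, ?_⟩
      rw [one_mul] at h2
      rw [h2]; group
  by_cases h : EP S b x L
  · rw [if_pos h, if_pos (hiff.1 h)]
  · rw [if_neg h, if_neg (fun h' => h (hiff.2 h'))]

lemma sum_exitProb_le_one (F : Finset G) (hF : ∀ y ∈ F, y ∉ S) (a : G) :
    ∑ y ∈ F, exitProb μ S a y ≤ 1 := by
  have hsummable : ∀ y ∈ F, Summable (fun L : List G => if EP S a y L then (L.map μ).prod else 0) :=
    fun y hy => summable_EP hpos hfin hsum (hF y hy)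
  have step1 : ∑ y ∈ F, exitProb μ S a y
      = ∑' L : List G, ∑ y ∈ F, (if EP S a y L then (L.map μ).prod else 0) := by
    rw [Summable.tsum_finsetSum hsummable]
    exact Finset.sum_congr rfl fun y _ => (exitProb_eq μ S a y)
  rw [step1]
  set P : List G → Prop := fun L => (∀ k < L.length, a * (L.take k).prod ∈ S) ∧ a * L.prod ∈ F
    with hP
  have hswap : ∀ L : List G, ∑ y ∈ F, (if EP S a y L then (L.map μ).prod else 0)
      = if P L then (L.map μ).prod else 0 := by
    intro L
    by_cases hpre : ∀ k < L.length, a * (L.take k).prod ∈ S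
    · have : ∀ y, EP S a y L ↔ a * L.prod = y := fun y => ⟨fun h => h.2, fun h => ⟨hpre, h⟩⟩
      calc ∑ y ∈ F, (if EP S a y L then (L.map μ).prod else 0)
          = ∑ y ∈ F, (if a * L.prod = y then (L.map μ).prod else 0) :=
            Finset.sum_congr rfl fun y _ => by
              by_cases h : a * L.prod = y
              · rw [if_pos ((this y).2 h), if_pos h]
              · rw [if_neg (fun h' => h ((this y).1 h')), if_neg h]
        _ = if a * L.prod ∈ F then (L.map μ).prod else 0 := Finset.sum_ite_eq F _ _
        _ = if P L then (L.map μ).prod else 0 := by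
              by_cases h : a * L.prod ∈ F
              · rw [if_pos h, if_pos ⟨hpre, h⟩]
              · rw [if_neg h, if_neg (fun h' => h h'.2)]
    · have h1 : ∀ y, ¬ EP S a y L := fun y h => hpre h.1
      have h2 : ¬ P L := fun h => hpre h.1
      simp [if_neg (h1 _), if_neg h2]
  calc ∑' L : List G, ∑ y ∈ F, (if EP S a y L then (L.map μ).prod else 0)
      = ∑' L : List G, (if P L then (L.map μ).prod else 0) := tsum_congr hswap
    _ ≤ 1 := by
        have hpf : ∀ L L', P L → P L' → L ≠ L' → ¬ L <+: L' := ?_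
        · refine le_trans (le_of_eq (tsum_congr fun L => ?_))
            (@kraft_summable G μ ⟨1⟩ hpos hfin hsum P hpf).2
          congr 1
        rintro L L' ⟨hp, hm⟩ ⟨hp', hm'⟩ hne hpf
        have hlt : L.length < L'.length := by
          rcases Nat.lt_or_ge L.length L'.length with h | h
          · exact h
          · exact absurd (hpf.eq_of_length (le_antisymm hpf.length_le h)) hne
        have ht : L'.take L.length = L := (List.prefix_iff_eq_take.1 hpf).symm
        have hmem := hp' L.length hlt
        rw [ht] at hmem
        exact hF _ hm hmem

end ExitLemmas

section DistLemmas

variable {G : Type*} [Group G] {μ : G → ℝ}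

lemma dDist_le_of_list (L : List G) (h : ∀ s ∈ L, 0 < μ s) :
    dDist μ 1 L.prod ≤ L.length :=
  Nat.sInf_le ⟨L, rfl, h, one_mul _⟩

variable (hgen : ∀ g : G, ∃ L : List G, (∀ s ∈ L, 0 < μ s) ∧ L.prod = g)
include hgen

lemma dDist_spec (g : G) :
    ∃ L : List G, L.length = dDist μ 1 g ∧ (∀ s ∈ L, 0 < μ s) ∧ L.prod = g := by
  have hne : {k : ℕ | ∃ L : List G, L.length = k ∧ (∀ s ∈ L, 0 < μ s) ∧ 1 * L.prod = g}.Nonempty := by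
    obtain ⟨L, hL, hLp⟩ := hgen g
    exact ⟨L.length, L, rfl, hL, by rw [one_mul, hLp]⟩
  obtain ⟨L, h1, h2, h3⟩ := Nat.sInf_mem hne
  exact ⟨L, h1, h2, by rwa [one_mul] at h3⟩

lemma sphere_zero_subset : {x : G | dDist μ 1 x = 0} ⊆ {1} := by
  intro x hx
  obtain ⟨L, h1, _, h3⟩ := dDist_spec hgen x
  rw [Set.mem_setOf_eq] at hx
  rw [hx] at h1
  rw [List.length_eq_zero_iff.1 h1] at h3
  simpa using h3.symm

lemma dDist_decompose {x : G} {n : ℕ} (hx : dDist μ 1 x = n + 1) :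
    ∃ b y : G, 0 < μ b ∧ x = b * y ∧ dDist μ 1 y = n := by
  obtain ⟨L, h1, h2, h3⟩ := dDist_spec hgen x
  rw [hx] at h1
  obtain ⟨b, T, rfl⟩ : ∃ b T, L = b :: T := by
    cases L with
    | nil => simp at h1
    | cons b T => exact ⟨b, T, rfl⟩
  refine ⟨b, T.prod, h2 b (by simp), by rw [← h3]; simp, ?_⟩
  have hle : dDist μ 1 T.prod ≤ n := by
    have := dDist_le_of_list (μ := μ) T (fun s hs => h2 s (by simp [hs]))
    simp only [List.length_cons] at h1
    omega
  rcases Nat.lt_or_ge (dDist μ 1 T.prod) n with hlt | hge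
  · exfalso
    obtain ⟨T', hT1, hT2, hT3⟩ := dDist_spec hgen T.prod
    have : dDist μ 1 x ≤ (b :: T').length := by
      refine le_trans (le_of_eq ?_) (dDist_le_of_list (μ := μ) (b :: T') ?_)
      · congr 1
        rw [← h3]
        simp [hT3]
      · intro s hs
        rcases List.mem_cons.1 hs with h | h
        · exact h ▸ h2 b (by simp)
        · exact hT2 s h
    simp only [List.length_cons, hT1] at this
    omega
  · omega

lemma geodesic_EP {x : G} {n : ℕ} (hx : dDist μ 1 x = n + 1) :
    ∃ L : List G, EP (dBall μ 1 n) 1 x L ∧ L.length = n + 1 ∧ ∀ s ∈ L, 0 < μ s := by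
  obtain ⟨L, h1, h2, h3⟩ := dDist_spec hgen x
  rw [hx] at h1
  refine ⟨L, ⟨?_, by rw [one_mul, h3]⟩, h1, h2⟩
  intro k hk
  rw [one_mul]
  show dDist μ 1 (L.take k).prod ≤ n
  refine le_trans (dDist_le_of_list (μ := μ) _ (fun s hs => h2 s ((List.take_prefix k L).subset hs))) ?_
  rw [List.length_take]
  omega

lemma mem_bdry_of_dDist {x : G} {n : ℕ} (hx : dDist μ 1 x = n + 1) :
    x ∈ bdry μ (dBall μ 1 n) := by
  constructor
  · show ¬ dDist μ 1 x ≤ n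
    omega
  · obtain ⟨L, h1, h2, h3⟩ := dDist_spec hgen x
    rw [hx] at h1
    rcases List.eq_nil_or_concat L with rfl | ⟨T, c, rfl⟩
    · simp at h1
    · refine ⟨T.prod, ?_, ?_⟩
      · show dDist μ 1 T.prod ≤ n
        refine le_trans (dDist_le_of_list (μ := μ) T (fun s hs => h2 s (by simp [hs]))) ?_
        simp only [List.concat_eq_append, List.length_append, List.length_cons,
          List.length_nil] at h1
        omega
      · have : T.prod⁻¹ * x = c := by
          rw [← h3]
          simp
        rw [this]
        exact h2 c (by simp)

lemma bdry_subset_ball (k : ℕ) : bdry μ (dBall μ 1 k) ⊆ dBall μ 1 (k + 1) := by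
  rintro x ⟨-, y, hy, hμ⟩
  obtain ⟨L, h1, h2, h3⟩ := dDist_spec hgen y
  show dDist μ 1 x ≤ k + 1
  have hx : (L ++ [y⁻¹ * x]).prod = x := by
    rw [List.prod_append, h3]
    simp
  have := dDist_le_of_list (μ := μ) (L ++ [y⁻¹ * x]) ?_
  · rw [hx] at this
    refine le_trans this ?_
    simp only [List.length_append, List.length_cons, List.length_nil, h1]
    have : dDist μ 1 y ≤ k := hy
    omega
  · intro s hs
    rcases List.mem_append.1 hs with h | h
    · exact h2 s h
    · simp only [List.mem_singleton] at h
      exact h ▸ hμ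

lemma ball_subset_shift {b : G} (hb : 0 < μ b) (n : ℕ) :
    dBall μ 1 n ⊆ {g : G | b * g ∈ dBall μ 1 (n + 1)} := by
  intro g hg
  obtain ⟨L, h1, h2, h3⟩ := dDist_spec hgen g
  show dDist μ 1 (b * g) ≤ n + 1
  have hx : (b :: L).prod = b * g := by rw [List.prod_cons, h3]
  have := dDist_le_of_list (μ := μ) (b :: L) ?_
  · rw [hx] at this
    refine le_trans this ?_
    simp only [List.length_cons, h1]
    have : dDist μ 1 g ≤ n := hg
    omega
  · intro s hs
    rcases List.mem_cons.1 hs with h | h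
    · exact h ▸ hb
    · exact h2 s h

lemma ball_finite (hfin : (Function.support μ).Finite) (r : ℕ) :
    (dBall μ 1 r).Finite := by
  classical
  have : dBall μ 1 r ⊆ (fun L : List G => L.prod) ''
      ((fun L : List ↥hfin.toFinset => L.map Subtype.val) '' {L | L.length ≤ r}) := by
    intro g hg
    obtain ⟨L, h1, h2, h3⟩ := dDist_spec hgen g
    have hlen : L.length ≤ r := by
      rw [h1]; exact hg
    refine ⟨L, ⟨L.attach.map (fun s => ⟨s.1, hfin.mem_toFinset.2 (ne_of_gt (h2 s.1 s.2))⟩), ?_, ?_⟩, h3⟩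
    · simp only [Set.mem_setOf_eq, List.length_map, List.length_attach]
      exact hlen
    · simp [List.map_map, Function.comp]
  refine Set.Finite.subset (Set.Finite.image _ (Set.Finite.image _ ?_)) this
  exact List.finite_length_le _ r

end DistLemmas

/-- If `ε(B(e,s); e, b) ≤ δ` for all `s > r₀` and all `b ∈ supp μ`, then the directed
spheres satisfy `|{x : d(e,x) = r}| ≤ C (1−δ)^{−r}` for some constant `C > 0`. -/
theorem sphere_growth_bound_of_eps_small
    {G : Type*} [Group G] [Countable G] (μ : G → ℝ)
    (hpos : ∀ s : G, 0 ≤ μ s) (hfin : (Function.support μ).Finite)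
    (hsum : ∑ᶠ s : G, μ s = 1)
    (hgen : ∀ g : G, ∃ L : List G, (∀ s ∈ L, 0 < μ s) ∧ L.prod = g)
    (δ : ℝ) (hδ0 : 0 < δ) (hδ1 : δ < 1) (r₀ : ℕ)
    (heps : ∀ s : ℕ, r₀ < s → ∀ b : G, 0 < μ b → epsRatio μ (dBall μ 1 s) 1 b ≤ δ) :
    ∃ C : ℝ, 0 < C ∧ ∀ r : ℕ,
      (({x : G | dDist μ 1 x = r}).ncard : ℝ) ≤ C * ((1 - δ) ^ r)⁻¹ := by
  classical
  have hAne : hfin.toFinset.Nonempty := by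
    by_contra h
    rw [Finset.not_nonempty_iff_eq_empty] at h
    rw [finsum_eq_sum μ hfin, h, Finset.sum_empty] at hsum
    exact zero_ne_one hsum
  set m := hfin.toFinset.inf' hAne μ with hm_def
  have hm0 : 0 < m := by
    obtain ⟨s, hs, hmeq⟩ := Finset.exists_mem_eq_inf' hAne μ
    rw [hm_def, hmeq]
    exact lt_of_le_of_ne (hpos s) (Ne.symm (hfin.mem_toFinset.1 hs))
  have hm_le : ∀ s : G, 0 < μ s → m ≤ μ s := fun s hs =>
    Finset.inf'_le μ (hfin.mem_toFinset.2 (ne_of_gt hs))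
  have hm1 : m ≤ 1 := by
    obtain ⟨s, hs, hmeq⟩ := Finset.exists_mem_eq_inf' hAne μ
    rw [hm_def, hmeq]
    calc μ s ≤ ∑ t ∈ hfin.toFinset, μ t := Finset.single_le_sum (fun t _ => hpos t) hs
      _ = 1 := by rw [← finsum_eq_sum μ hfin]; exact hsum
  have h1δ : (0:ℝ) < 1 - δ := by linarith
  have hδ1' : (0:ℝ) < 1 + δ := by linarith
  -- geodesic lower bound
  have hgeod : ∀ n : ℕ, ∀ x : G, dDist μ 1 x = n + 1 →
      m ^ (n + 1) ≤ exitProb μ (dBall μ 1 n) 1 x := by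
    intro n x hx
    obtain ⟨L, hEP, hlen, hposL⟩ := geodesic_EP hgen hx
    have hxout : x ∉ dBall μ 1 n := by
      show ¬ dDist μ 1 x ≤ n; omega
    refine le_trans ?_ (le_exitProb hpos hfin hsum hxout hEP)
    rw [← hlen]
    exact pow_le_prod_map μ hm0.le hpos L (fun s hs => hm_le s (hposL s hs))
  -- epsRatio consequence
  have hkey : ∀ n : ℕ, r₀ < n → ∀ b : G, 0 < μ b → ∀ x : G, dDist μ 1 x = n + 1 →
      exitProb μ (dBall μ 1 n) b x ≤ (1 + δ) * exitProb μ (dBall μ 1 n) 1 x := by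
    intro n hn b hb x hx
    set S := dBall μ 1 n with hS
    have hx_bdry : x ∈ bdry μ S := mem_bdry_of_dDist hgen hx
    have hp1 : 0 < exitProb μ S 1 x := lt_of_lt_of_le (pow_pos hm0 (n+1)) (hgeod n x hx)
    have hbdd : BddAbove {r : ℝ | ∃ y ∈ bdry μ S, 0 < exitProb μ S 1 y ∧
        r = |exitProb μ S 1 y - exitProb μ S b y| / exitProb μ S 1 y} := by
      have hfinb : (bdry μ S).Finite :=
        (ball_finite hgen hfin (n+1)).subset (bdry_subset_ball hgen n)
      refine Set.Finite.bddAbove (Set.Finite.subset (hfinb.image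
        (fun y => |exitProb μ S 1 y - exitProb μ S b y| / exitProb μ S 1 y)) ?_)
      rintro r ⟨y, hy, -, rfl⟩
      exact ⟨y, hy, rfl⟩
    have hratio : |exitProb μ S 1 x - exitProb μ S b x| / exitProb μ S 1 x ≤ δ :=
      le_trans (le_csSup hbdd ⟨x, hx_bdry, hp1, rfl⟩) (heps n hn b hb)
    rw [div_le_iff₀ hp1] at hratio
    have habs := abs_le.1 hratio
    linarith [habs.1]
  -- main inductive claim
  have claimA : ∀ n : ℕ, ∀ x : G, dDist μ 1 x = n + 1 →
      m ^ (r₀ + 1) * ((1 + δ)⁻¹) ^ n ≤ exitProb μ (dBall μ 1 n) 1 x := by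
    intro n
    induction n with
    | zero =>
        intro x hx
        refine le_trans ?_ (hgeod 0 x hx)
        simp only [pow_zero, mul_one]
        calc m ^ (r₀ + 1) ≤ m ^ 1 := pow_le_pow_of_le_one hm0.le hm1 (by omega)
          _ = m ^ (0 + 1) := by norm_num
    | succ n ih =>
        intro x hx
        by_cases hcase : n + 1 ≤ r₀
        · refine le_trans ?_ (hgeod (n+1) x hx)
          have h1 : m ^ (r₀ + 1) ≤ m ^ (n + 1 + 1) := pow_le_pow_of_le_one hm0.le hm1 (by omega)
          have h2 : ((1 + δ)⁻¹) ^ (n + 1) ≤ 1 :=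
            pow_le_one₀ (inv_nonneg.2 hδ1'.le) (by rw [inv_le_one₀ hδ1']; linarith)
          calc m ^ (r₀ + 1) * ((1 + δ)⁻¹) ^ (n + 1)
              ≤ m ^ (r₀ + 1) * 1 := mul_le_mul_of_nonneg_left h2 (pow_nonneg hm0.le _)
            _ = m ^ (r₀ + 1) := mul_one _
            _ ≤ m ^ (n + 1 + 1) := h1
        · push_neg at hcase
          obtain ⟨b, y, hb, rfl, hy⟩ := dDist_decompose hgen hx
          have htrans : exitProb μ (dBall μ 1 (n+1)) b (b * y)
              = exitProb μ {g | b * g ∈ dBall μ 1 (n+1)} 1 y := by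
            rw [exitProb_translate b]
            congr 1
            group
          have hnotin : y ∉ {g : G | b * g ∈ dBall μ 1 (n+1)} := by
            show ¬ dDist μ 1 (b * y) ≤ n + 1
            omega
          have hmono : exitProb μ (dBall μ 1 n) 1 y
              ≤ exitProb μ {g | b * g ∈ dBall μ 1 (n+1)} 1 y :=
            exitProb_mono hpos hfin hsum (ball_subset_shift hgen hb n) hnotin
          have hbound := hkey (n+1) hcase b hb (b * y) hx
          rw [htrans] at hbound
          have hIH := ih y hy
          have hchain : m ^ (r₀ + 1) * ((1 + δ)⁻¹) ^ n
              ≤ (1 + δ) * exitProb μ (dBall μ 1 (n+1)) 1 (b * y) :=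
            le_trans hIH (le_trans hmono hbound)
          have hp1 : (0:ℝ) ≤ exitProb μ (dBall μ 1 (n+1)) 1 (b * y) := exitProb_nonneg_s11 hpos
          calc m ^ (r₀ + 1) * ((1 + δ)⁻¹) ^ (n + 1)
              = (m ^ (r₀ + 1) * ((1 + δ)⁻¹) ^ n) * (1 + δ)⁻¹ := by ring
            _ ≤ ((1 + δ) * exitProb μ (dBall μ 1 (n+1)) 1 (b * y)) * (1 + δ)⁻¹ :=
                mul_le_mul_of_nonneg_right hchain (inv_nonneg.2 hδ1'.le)
            _ = exitProb μ (dBall μ 1 (n+1)) 1 (b * y) := by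
                field_simp
  -- finish
  refine ⟨(m ^ (r₀ + 1))⁻¹ + 1, by positivity, ?_⟩
  intro r
  have hCpos : (0:ℝ) < (m ^ (r₀ + 1))⁻¹ := by positivity
  have hpowinv : (1:ℝ) ≤ ((1 - δ) ^ r)⁻¹ :=
    (one_le_inv₀ (pow_pos h1δ r)).2 (pow_le_one₀ h1δ.le (by linarith))
  cases r with
  | zero =>
      have hcard : ({x : G | dDist μ 1 x = 0}).ncard ≤ 1 := by
        have := Set.ncard_le_ncard (sphere_zero_subset hgen) (Set.finite_singleton 1)
        simpa using this
      calc (({x : G | dDist μ 1 x = 0}).ncard : ℝ) ≤ 1 := by exact_mod_cast hcard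
        _ ≤ ((m ^ (r₀ + 1))⁻¹ + 1) * ((1 - δ) ^ 0)⁻¹ := by
            simp only [pow_zero, inv_one, mul_one]
            linarith
  | succ n =>
      set β := m ^ (r₀ + 1) * ((1 + δ)⁻¹) ^ n with hβ
      have hβ0 : 0 < β := by positivity
      have hsfin : ({x : G | dDist μ 1 x = n + 1}).Finite :=
        (ball_finite hgen hfin (n+1)).subset (fun x hx => le_of_eq hx)
      have hsum1 : ∑ x ∈ hsfin.toFinset, exitProb μ (dBall μ 1 n) 1 x ≤ 1 := by
        refine sum_exitProb_le_one hpos hfin hsum _ ?_ 1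
        intro x hxF
        have hxd := hsfin.mem_toFinset.1 hxF
        show ¬ dDist μ 1 x ≤ n
        rw [Set.mem_setOf_eq] at hxd
        omega
      have hlb : ∀ x ∈ hsfin.toFinset, β ≤ exitProb μ (dBall μ 1 n) 1 x := by
        intro x hxF
        exact claimA n x (hsfin.mem_toFinset.1 hxF)
      have hcard : (hsfin.toFinset.card : ℝ) * β ≤ 1 := by
        have := Finset.card_nsmul_le_sum hsfin.toFinset _ β hlb
        rw [nsmul_eq_mul] at this
        exact le_trans this hsum1
      have hncard : (({x : G | dDist μ 1 x = n + 1}).ncard : ℝ) = hsfin.toFinset.card := by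
        rw [Set.ncard_eq_toFinset_card _ hsfin]
      rw [hncard]
      have step1 : (hsfin.toFinset.card : ℝ) ≤ β⁻¹ := by
        rw [← one_div]
        exact (le_div_iff₀ hβ0).2 hcard
      refine le_trans step1 ?_
      have hββ : β⁻¹ = (m ^ (r₀ + 1))⁻¹ * (1 + δ) ^ n := by
        rw [hβ, mul_inv, inv_pow, inv_inv]
      rw [hββ]
      have hle1 : (1 + δ) ≤ (1 - δ)⁻¹ := by
        rw [← one_div, le_div_iff₀ h1δ]
        nlinarith
      have hle2 : (1 + δ) ^ n ≤ ((1 - δ)⁻¹) ^ (n + 1) := by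
        calc (1 + δ) ^ n ≤ ((1 - δ)⁻¹) ^ n := pow_le_pow_left₀ hδ1'.le hle1 n
          _ ≤ ((1 - δ)⁻¹) ^ (n + 1) :=
              pow_le_pow_right₀ ((one_le_inv₀ h1δ).2 (by linarith)) (by omega)
      calc (m ^ (r₀ + 1))⁻¹ * (1 + δ) ^ n
          ≤ (m ^ (r₀ + 1))⁻¹ * ((1 - δ)⁻¹) ^ (n + 1) :=
            mul_le_mul_of_nonneg_left hle2 hCpos.le
        _ = (m ^ (r₀ + 1))⁻¹ * ((1 - δ) ^ (n + 1))⁻¹ := by rw [inv_pow]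
        _ ≤ ((m ^ (r₀ + 1))⁻¹ + 1) * ((1 - δ) ^ (n + 1))⁻¹ := by
            have : (0:ℝ) < ((1 - δ) ^ (n + 1))⁻¹ := by positivity
            nlinarith
end

section
/- Let e be the identity of G, let δ ∈ (0,1), let r_0 ∈ ℕ, and suppose that ε(B(e,s); e, b) ≤ δ for every natural number s > r_0 and every b ∈ supp(μ). Then there exists a constant C > 0 such that for every s ∈ ℕ, the directed ball satisfies |B(e,s)| ≤ C·(1−δ)^{−s}. -/
set_option linter.unusedSectionVars false
set_option maxHeartbeats 1000000

namespace BallGrowthAux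
open Classical


variable {G : Type*} [Group G]

/-- Summand of `exitProb`. -/
noncomputable def eP (μ : G → ℝ) (S : Set G) (a x : G) (L : List G) : ℝ :=
  if (∀ k < L.length, a * (L.take k).prod ∈ S) ∧ a * L.prod = x then (L.map μ).prod else 0

/-- Summand for "exit somewhere". -/
noncomputable def eX (μ : G → ℝ) (S : Set G) (a : G) (L : List G) : ℝ :=
  if (∀ k < L.length, a * (L.take k).prod ∈ S) ∧ a * L.prod ∉ S then (L.map μ).prod else 0

variable {μ : G → ℝ}

lemma wt_nonneg (hpos : ∀ s : G, 0 ≤ μ s) (L : List G) : 0 ≤ (L.map μ).prod :=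
  List.prod_nonneg (by
    intro x hx
    rcases List.mem_map.1 hx with ⟨s, _, rfl⟩
    exact hpos s)

lemma eP_nonneg (hpos : ∀ s : G, 0 ≤ μ s) (S : Set G) (a x : G) (L : List G) :
    0 ≤ eP μ S a x L := by
  unfold eP; split
  · exact wt_nonneg hpos L
  · exact le_refl 0

lemma eX_nonneg (hpos : ∀ s : G, 0 ≤ μ s) (S : Set G) (a : G) (L : List G) :
    0 ≤ eX μ S a L := by
  unfold eX; split
  · exact wt_nonneg hpos L
  · exact le_refl 0

lemma eP_le_eX (hpos : ∀ s : G, 0 ≤ μ s) (S : Set G) (a x : G) (hx : x ∉ S) (L : List G) :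
    eP μ S a x L ≤ eX μ S a L := by
  unfold eP eX
  split
  · rename_i h
    rw [if_pos ⟨h.1, h.2 ▸ hx⟩]
  · split
    · exact wt_nonneg hpos L
    · exact le_refl 0

/-- Lists of length `n` with entries in `F`. -/
noncomputable def Ln (F : Finset G) : ℕ → Finset (List G)
  | 0 => {[]}
  | n + 1 => F.biUnion fun b => ((Ln F n).image (List.cons b))

lemma mem_Ln {F : Finset G} : ∀ {n : ℕ} {L : List G},
    L ∈ Ln F n ↔ L.length = n ∧ ∀ s ∈ L, s ∈ F := by
  intro n
  induction n with
  | zero =>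
    intro L
    constructor
    · intro h
      have : L = [] := by simpa [Ln] using h
      subst this; simp
    · rintro ⟨h1, -⟩
      have : L = [] := List.length_eq_zero_iff.1 h1
      subst this; simp [Ln]
  | succ n ih =>
    intro L
    simp only [Ln, Finset.mem_biUnion, Finset.mem_image]
    constructor
    · rintro ⟨b, hb, M, hM, rfl⟩
      rcases ih.1 hM with ⟨h1, h2⟩
      refine ⟨by simp [h1], ?_⟩
      intro s hs
      rcases List.mem_cons.1 hs with rfl | hs
      · exact hb
      · exact h2 s hs
    · rintro ⟨h1, h2⟩
      cases L with
      | nil => simp at h1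
      | cons b M =>
        refine ⟨b, h2 b (by simp), M, ih.2 ⟨by simpa using h1, fun s hs => h2 s (by simp [hs])⟩, rfl⟩

lemma sum_Ln_succ (F : Finset G) (n : ℕ) (f : List G → ℝ) :
    ∑ L ∈ Ln F (n + 1), f L = ∑ b ∈ F, ∑ L ∈ Ln F n, f (b :: L) := by
  rw [show Ln F (n+1) = F.biUnion fun b => ((Ln F n).image (List.cons b)) from rfl]
  rw [Finset.sum_biUnion]
  · refine Finset.sum_congr rfl fun b _ => ?_
    rw [Finset.sum_image]
    intro x _ y _ h
    simpa using h
  · intro b _ c _ hbc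
    simp only [Finset.disjoint_left]
    intro t ht1 ht2
    rcases Finset.mem_image.1 ht1 with ⟨M, _, rfl⟩
    rcases Finset.mem_image.1 ht2 with ⟨M', _, hM'⟩
    have : c = b := (List.cons_eq_cons.1 hM').1
    exact hbc this.symm

lemma eX_cons (S : Set G) (a b : G) (L : List G) :
    eX μ S a (b :: L) = if a ∈ S then μ b * eX μ S (a * b) L else 0 := by
  unfold eX
  by_cases ha : a ∈ S
  · rw [if_pos ha]
    by_cases h : (∀ k < L.length, (a * b) * (L.take k).prod ∈ S) ∧ (a * b) * L.prod ∉ S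
    · rw [if_pos h, if_pos, List.map_cons, List.prod_cons]
      constructor
      · intro k hk
        cases k with
        | zero => simpa using ha
        | succ k =>
          have := h.1 k (by simpa using hk)
          simpa [List.take_succ_cons, List.prod_cons, mul_assoc] using this
      · simpa [List.prod_cons, mul_assoc] using h.2
    · rw [if_neg h, if_neg]
      · ring
      · intro hcon
        apply h
        constructor
        · intro k hk
          have := hcon.1 (k + 1) (by simpa using hk)
          simpa [List.take_succ_cons, List.prod_cons, mul_assoc] using this
        · simpa [List.prod_cons, mul_assoc] using hcon.2
  · rw [if_neg ha, if_neg]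
    intro hcon
    exact ha (by simpa using hcon.1 0 (Nat.succ_pos _))

lemma eX_nil (S : Set G) (a : G) : eX μ S a [] = if a ∈ S then 0 else 1 := by
  unfold eX
  by_cases ha : a ∈ S
  · rw [if_pos ha, if_neg (by simp [ha])]
  · rw [if_neg ha, if_pos ⟨by simp, by simpa using ha⟩]
    simp

lemma core_le_one (hpos : ∀ s : G, 0 ≤ μ s) (F : Finset G) (hμF : ∑ b ∈ F, μ b = 1)
    (S : Set G) : ∀ n : ℕ, ∀ a : G,
    ∑ k ∈ Finset.range (n + 1), ∑ L ∈ Ln F k, eX μ S a L ≤ 1 := by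
  intro n
  induction n with
  | zero =>
    intro a
    simp only [zero_add, Finset.range_one, Finset.sum_singleton]
    have h1 : ∑ L ∈ Ln F 0, eX μ S a L = eX μ S a [] := by
      simp [Ln]
    rw [h1, eX_nil]
    split <;> norm_num
  | succ n ih =>
    intro a
    rw [Finset.sum_range_succ']
    have h0 : ∑ L ∈ Ln F 0, eX μ S a L = eX μ S a [] := by simp [Ln]
    by_cases ha : a ∈ S
    · have h0' : ∑ L ∈ Ln F 0, eX μ S a L = 0 := by
        rw [h0]; unfold eX; rw [if_neg (by simp [ha])]
      rw [h0', add_zero]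
      have hterm : ∀ k, ∑ L ∈ Ln F (k + 1), eX μ S a L
          = ∑ b ∈ F, μ b * ∑ L ∈ Ln F k, eX μ S (a * b) L := by
        intro k
        rw [sum_Ln_succ]
        refine Finset.sum_congr rfl fun b _ => ?_
        rw [Finset.mul_sum]
        refine Finset.sum_congr rfl fun L _ => ?_
        rw [eX_cons, if_pos ha]
      calc ∑ k ∈ Finset.range (n + 1), ∑ L ∈ Ln F (k + 1), eX μ S a L
          = ∑ b ∈ F, μ b * ∑ k ∈ Finset.range (n + 1), ∑ L ∈ Ln F k, eX μ S (a * b) L := by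
            simp_rw [hterm, Finset.mul_sum]
            rw [Finset.sum_comm]
        _ ≤ ∑ b ∈ F, μ b * 1 :=
            Finset.sum_le_sum fun b _ => mul_le_mul_of_nonneg_left (ih (a * b)) (hpos b)
        _ = 1 := by simp [hμF]
    · have hterm : ∀ k ∈ Finset.range (n + 1), ∑ L ∈ Ln F (k + 1), eX μ S a L = 0 := by
        intro k _
        rw [sum_Ln_succ]
        refine Finset.sum_eq_zero fun b _ => Finset.sum_eq_zero fun L _ => ?_
        rw [eX_cons, if_neg ha]
      rw [Finset.sum_congr rfl hterm]
      simp only [Finset.sum_const_zero, zero_add]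
      rw [h0, eX_nil, if_neg ha]

lemma sum_eX_le_one (hpos : ∀ s : G, 0 ≤ μ s) (hfin : (Function.support μ).Finite)
    (hμ1 : ∑ᶠ s : G, μ s = 1) (S : Set G) (a : G) (t : Finset (List G)) :
    ∑ L ∈ t, eX μ S a L ≤ 1 := by
  classical
  set F : Finset G := hfin.toFinset with hF
  have hμF : ∑ b ∈ F, μ b = 1 := by
    rw [← finsum_eq_sum μ hfin]; exact hμ1
  have hfilter : ∑ L ∈ t.filter (fun L => ∀ s ∈ L, s ∈ F), eX μ S a L = ∑ L ∈ t, eX μ S a L := by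
    refine Finset.sum_filter_of_ne fun L _ hne s hs => ?_
    by_contra hsF
    apply hne
    have hμs : μ s = 0 := by
      by_contra h0
      exact hsF (by simp [hF, Function.mem_support, h0])
    have : (L.map μ).prod = 0 :=
      List.prod_eq_zero (by exact List.mem_map.2 ⟨s, hs, hμs⟩)
    unfold eX
    split <;> simp [this]
  rw [← hfilter]
  set N := t.sup List.length with hN
  have hsub : t.filter (fun L => ∀ s ∈ L, s ∈ F) ⊆
      (Finset.range (N + 1)).biUnion (Ln F) := by
    intro L hL
    rcases Finset.mem_filter.1 hL with ⟨hLt, hLF⟩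
    refine Finset.mem_biUnion.2 ⟨L.length, ?_, mem_Ln.2 ⟨rfl, hLF⟩⟩
    exact Finset.mem_range.2 (Nat.lt_succ_of_le (Finset.le_sup hLt))
  calc ∑ L ∈ t.filter (fun L => ∀ s ∈ L, s ∈ F), eX μ S a L
      ≤ ∑ L ∈ (Finset.range (N + 1)).biUnion (Ln F), eX μ S a L :=
        Finset.sum_le_sum_of_subset_of_nonneg hsub fun L _ _ => eX_nonneg hpos S a L
    _ = ∑ k ∈ Finset.range (N + 1), ∑ L ∈ Ln F k, eX μ S a L := by
        refine Finset.sum_biUnion ?_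
        intro i _ j _ hij
        simp only [Finset.disjoint_left]
        intro L hLi hLj
        exact hij ((mem_Ln.1 hLi).1 ▸ (mem_Ln.1 hLj).1 ▸ rfl)
    _ ≤ 1 := core_le_one hpos F hμF S N a

lemma summable_eX (hpos : ∀ s : G, 0 ≤ μ s) (hfin : (Function.support μ).Finite)
    (hμ1 : ∑ᶠ s : G, μ s = 1) (S : Set G) (a : G) : Summable (eX μ S a) :=
  summable_of_sum_le (fun L => eX_nonneg hpos S a L) (sum_eX_le_one hpos hfin hμ1 S a)

lemma tsum_eX_le_one (hpos : ∀ s : G, 0 ≤ μ s) (hfin : (Function.support μ).Finite)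
    (hμ1 : ∑ᶠ s : G, μ s = 1) (S : Set G) (a : G) : ∑' L, eX μ S a L ≤ 1 :=
  Summable.tsum_le_of_sum_le (summable_eX hpos hfin hμ1 S a) (sum_eX_le_one hpos hfin hμ1 S a)

lemma summable_eP (hpos : ∀ s : G, 0 ≤ μ s) (hfin : (Function.support μ).Finite)
    (hμ1 : ∑ᶠ s : G, μ s = 1) (S : Set G) (a x : G) (hx : x ∉ S) :
    Summable (eP μ S a x) :=
  Summable.of_nonneg_of_le (fun L => eP_nonneg hpos S a x L)
    (fun L => eP_le_eX hpos S a x hx L) (summable_eX hpos hfin hμ1 S a)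

lemma exitProb_eq (S : Set G) (a x : G) : exitProb μ S a x = ∑' L, eP μ S a x L := rfl

lemma exitProb_nonneg (hpos : ∀ s : G, 0 ≤ μ s) (S : Set G) (a x : G) :
    0 ≤ exitProb μ S a x := by
  rw [exitProb_eq]
  exact tsum_nonneg fun L => eP_nonneg hpos S a x L

lemma wt_le_exitProb (hpos : ∀ s : G, 0 ≤ μ s) (hfin : (Function.support μ).Finite)
    (hμ1 : ∑ᶠ s : G, μ s = 1) (S : Set G) (a x : G) (hx : x ∉ S) (L : List G)
    (h1 : ∀ k < L.length, a * (L.take k).prod ∈ S) (h2 : a * L.prod = x) :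
    (L.map μ).prod ≤ exitProb μ S a x := by
  rw [exitProb_eq]
  have := Summable.le_tsum (summable_eP hpos hfin hμ1 S a x hx) L
    (fun j _ => eP_nonneg hpos S a x j)
  calc (L.map μ).prod = eP μ S a x L := by rw [eP, if_pos ⟨h1, h2⟩]
    _ ≤ _ := this

lemma sum_exitProb_le_one (hpos : ∀ s : G, 0 ≤ μ s) (hfin : (Function.support μ).Finite)
    (hμ1 : ∑ᶠ s : G, μ s = 1) (S : Set G) (a : G) (T : Finset G) (hT : ∀ x ∈ T, x ∉ S) :
    ∑ x ∈ T, exitProb μ S a x ≤ 1 := by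
  have hsummand : ∀ L : List G, ∑ x ∈ T, eP μ S a x L ≤ eX μ S a L := by
    intro L
    by_cases hmem : a * L.prod ∈ T
    · have hz : ∀ x ∈ T, x ≠ a * L.prod → eP μ S a x L = 0 := by
        intro x _ hne
        rw [eP, if_neg]
        rintro ⟨-, h2⟩
        exact hne (h2 ▸ rfl)
      rw [Finset.sum_eq_single_of_mem _ hmem hz]
      exact eP_le_eX hpos S a _ (hT _ hmem) L
    · have : ∀ x ∈ T, eP μ S a x L = 0 := by
        intro x hxT
        rw [eP, if_neg]
        rintro ⟨-, h2⟩
        exact hmem (h2 ▸ hxT)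
      rw [Finset.sum_eq_zero this]
      exact eX_nonneg hpos S a L
  have hsummableP : ∀ x ∈ T, Summable (eP μ S a x) := fun x hxT =>
    summable_eP hpos hfin hμ1 S a x (hT x hxT)
  calc ∑ x ∈ T, exitProb μ S a x = ∑' L, ∑ x ∈ T, eP μ S a x L := by
        simp_rw [exitProb_eq]
        exact (Summable.tsum_finsetSum hsummableP).symm
    _ ≤ ∑' L, eX μ S a L :=
        Summable.tsum_le_tsum hsummand (summable_sum fun x hxT => hsummableP x hxT)
          (summable_eX hpos hfin hμ1 S a)
    _ ≤ 1 := tsum_eX_le_one hpos hfin hμ1 S a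

lemma exitProb_le_one (hpos : ∀ s : G, 0 ≤ μ s) (hfin : (Function.support μ).Finite)
    (hμ1 : ∑ᶠ s : G, μ s = 1) (S : Set G) (a x : G) (hx : x ∉ S) :
    exitProb μ S a x ≤ 1 := by
  have := sum_exitProb_le_one hpos hfin hμ1 S a {x} (by simpa using hx)
  simpa using this

section Dist

variable (hgen : ∀ g : G, ∃ L : List G, (∀ s ∈ L, 0 < μ s) ∧ L.prod = g)

lemma dDist_le' (a g : G) (L : List G) (h : ∀ s ∈ L, 0 < μ s) (hprod : a * L.prod = g) :
    dDist μ a g ≤ L.length :=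
  Nat.sInf_le ⟨L, rfl, h, hprod⟩

include hgen in
lemma dDist_spec (a g : G) : ∃ L : List G,
    L.length = dDist μ a g ∧ (∀ s ∈ L, 0 < μ s) ∧ a * L.prod = g := by
  rcases hgen (a⁻¹ * g) with ⟨L, h1, h2⟩
  unfold dDist
  have hne : {k : ℕ | ∃ L : List G, L.length = k ∧ (∀ s ∈ L, 0 < μ s) ∧ a * L.prod = g}.Nonempty :=
    ⟨L.length, L, rfl, h1, by rw [h2, mul_inv_cancel_left]⟩
  exact Nat.sInf_mem hne

lemma mem_dBall {a g : G} {r : ℕ} : g ∈ dBall μ a r ↔ dDist μ a g ≤ r := Iff.rfl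

include hgen in
lemma dDist_of_bdry (t : ℕ) (x : G) (hx : x ∈ bdry μ (dBall μ 1 t)) :
    dDist μ 1 x = t + 1 := by
  obtain ⟨hxn, y, hy, hμ⟩ := hx
  obtain ⟨L, hlen, hLpos, hLprod⟩ := dDist_spec hgen 1 y
  have hle : dDist μ 1 x ≤ t + 1 := by
    have h1 : ∀ s ∈ L ++ [y⁻¹ * x], 0 < μ s := by
      intro s hs
      rcases List.mem_append.1 hs with h | h
      · exact hLpos s h
      · rcases List.mem_singleton.1 h with rfl
        exact hμ
    have h2 : 1 * (L ++ [y⁻¹ * x]).prod = x := by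
      simp only [List.prod_append, List.prod_singleton]
      rw [one_mul] at hLprod
      rw [one_mul, hLprod, mul_inv_cancel_left]
    calc dDist μ 1 x ≤ (L ++ [y⁻¹ * x]).length := dDist_le' 1 x _ h1 h2
      _ = dDist μ 1 y + 1 := by simp [hlen]
      _ ≤ t + 1 := by exact Nat.add_le_add_right hy 1
  have hgt : t < dDist μ 1 x := lt_of_not_ge hxn
  omega

include hgen in
lemma bdry_of_dDist (t : ℕ) (x : G) (hx : dDist μ 1 x = t + 1) :
    x ∈ bdry μ (dBall μ 1 t) := by
  obtain ⟨L, hlen, hLpos, hLprod⟩ := dDist_spec hgen 1 x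
  rw [hx] at hlen
  have hLne : L ≠ [] := by
    intro h; subst h; simp at hlen
  have hsplit : L.dropLast ++ [L.getLast hLne] = L := List.dropLast_append_getLast hLne
  set y : G := L.dropLast.prod with hy
  have hyball : y ∈ dBall μ 1 t := by
    have : dDist μ 1 y ≤ L.dropLast.length :=
      dDist_le' 1 y _ (fun s hs => hLpos s (List.dropLast_subset L hs)) (one_mul _)
    rw [mem_dBall]
    refine le_trans this ?_
    rw [List.length_dropLast, hlen]
    omega
  have hprodsplit : y * L.getLast hLne = x := by
    rw [one_mul] at hLprod
    rw [hy, ← List.prod_singleton (x := L.getLast hLne), ← List.prod_append, hsplit, hLprod]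
  refine ⟨?_, y, hyball, ?_⟩
  · rw [mem_dBall, hx]
    omega
  · have : y⁻¹ * x = L.getLast hLne := by rw [← hprodsplit, inv_mul_cancel_left]
    rw [this]
    exact hLpos _ (List.getLast_mem hLne)

include hgen in
lemma dDist_mul_le (b u : G) (hb : 0 < μ b) :
    dDist μ 1 (b * u) ≤ dDist μ 1 u + 1 := by
  obtain ⟨L, hlen, hLpos, hLprod⟩ := dDist_spec hgen 1 u
  have h1 : ∀ s ∈ b :: L, 0 < μ s := by
    intro s hs
    rcases List.mem_cons.1 hs with rfl | hs
    · exact hb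
    · exact hLpos s hs
  have h2 : 1 * (b :: L).prod = b * u := by
    rw [one_mul] at hLprod
    rw [List.prod_cons, one_mul, hLprod]
  calc dDist μ 1 (b * u) ≤ (b :: L).length := dDist_le' 1 _ _ h1 h2
    _ = dDist μ 1 u + 1 := by simp [hlen]

include hgen in
lemma dBall_zero_subset : dBall μ 1 0 ⊆ {1} := by
  intro g hg
  obtain ⟨L, hlen, -, hLprod⟩ := dDist_spec hgen 1 g
  rw [mem_dBall, Nat.le_zero] at hg
  rw [hg] at hlen
  have : L = [] := List.length_eq_zero_iff.1 hlen
  subst this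
  simp only [List.prod_nil, mul_one] at hLprod
  simp [← hLprod]

include hgen in
lemma dBall_succ_subset' (t : ℕ) : dBall μ 1 (t + 1) ⊆
    dBall μ 1 t ∪ (fun p : G × G => p.1 * p.2) '' ((dBall μ 1 t) ×ˢ (Function.support μ)) := by
  intro g hg
  by_cases hgt : dDist μ 1 g ≤ t
  · exact Or.inl hgt
  · have hx : dDist μ 1 g = t + 1 := le_antisymm hg (by omega)
    obtain ⟨hgn, y, hy, hμ⟩ := bdry_of_dDist hgen t g hx
    exact Or.inr ⟨⟨y, y⁻¹ * g⟩, ⟨hy, by simpa using ne_of_gt hμ⟩, by simp⟩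

include hgen in
lemma dBall_finite (hfin : (Function.support μ).Finite) (t : ℕ) :
    (dBall μ 1 t).Finite := by
  induction t with
  | zero => exact Set.Finite.subset (Set.finite_singleton 1) (dBall_zero_subset hgen)
  | succ t ih =>
    refine Set.Finite.subset (Set.Finite.union ih (Set.Finite.image _ (Set.Finite.prod ih hfin)))
      (dBall_succ_subset' hgen t)

lemma bdry_finite (hfin : (Function.support μ).Finite) {S : Set G} (hS : S.Finite) :
    (bdry μ S).Finite := by
  refine Set.Finite.subset (Set.Finite.image (fun p : G × G => p.1 * p.2) (Set.Finite.prod hS hfin)) ?_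
  rintro x ⟨hxn, y, hy, hμ⟩
  exact ⟨⟨y, y⁻¹ * x⟩, ⟨hy, by simpa using ne_of_gt hμ⟩, by simp⟩

include hgen in
lemma dBall_succ_subset (t : ℕ) :
    dBall μ 1 (t + 1) ⊆ dBall μ 1 t ∪ bdry μ (dBall μ 1 t) := by
  intro g hg
  have hg' : dDist μ 1 g ≤ t + 1 := hg
  by_cases hgt : dDist μ 1 g ≤ t
  · exact Or.inl hgt
  · exact Or.inr (bdry_of_dDist hgen t g (by omega))

end Dist

section Main

variable (hpos : ∀ s : G, 0 ≤ μ s) (hfin : (Function.support μ).Finite)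
  (hμ1 : ∑ᶠ s : G, μ s = 1)
  (hgen : ∀ g : G, ∃ L : List G, (∀ s ∈ L, 0 < μ s) ∧ L.prod = g)

include hpos hfin hμ1 hgen in
lemma exitProb_pos_of_bdry (t : ℕ) (x : G) (hx : x ∈ bdry μ (dBall μ 1 t)) :
    0 < exitProb μ (dBall μ 1 t) 1 x := by
  have hd : dDist μ 1 x = t + 1 := dDist_of_bdry hgen t x hx
  obtain ⟨L, hlen, hLpos, hLprod⟩ := dDist_spec hgen 1 x
  rw [hd] at hlen
  have hcond : ∀ k < L.length, 1 * (L.take k).prod ∈ dBall μ 1 t := by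
    intro k hk
    rw [one_mul, mem_dBall]
    have h1 : dDist μ 1 (L.take k).prod ≤ (L.take k).length :=
      dDist_le' 1 _ _ (fun s hs => hLpos s (List.take_subset k L hs)) (one_mul _)
    have h2 : (L.take k).length ≤ k := by simp [List.length_take]
    omega
  have hwt : 0 < (L.map μ).prod := by
    apply List.prod_pos
    intro r hr
    rcases List.mem_map.1 hr with ⟨s, hs, rfl⟩
    exact hLpos s hs
  exact lt_of_lt_of_le hwt
    (wt_le_exitProb hpos hfin hμ1 _ 1 x hx.1 L hcond hLprod)

include hpos hfin hμ1 hgen in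
lemma exit_step (t : ℕ) (b w : G) (hb : 0 < μ b)
    (hw : w ∈ bdry μ (dBall μ 1 t)) (hbw : b * w ∉ dBall μ 1 (t + 1)) :
    exitProb μ (dBall μ 1 t) 1 w ≤ exitProb μ (dBall μ 1 (t + 1)) b (b * w) := by
  rw [exitProb_eq, exitProb_eq]
  have hle : ∀ L : List G,
      eP μ (dBall μ 1 t) 1 w L ≤ eP μ (dBall μ 1 (t + 1)) b (b * w) L := by
    intro L
    by_cases hc : (∀ k < L.length, 1 * (L.take k).prod ∈ dBall μ 1 t) ∧ 1 * L.prod = w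
    · have hc' : (∀ k < L.length, b * (L.take k).prod ∈ dBall μ 1 (t + 1)) ∧
          b * L.prod = b * w := by
        constructor
        · intro k hk
          have h1 : (L.take k).prod ∈ dBall μ 1 t := by
            have := hc.1 k hk; rwa [one_mul] at this
          rw [mem_dBall]
          calc dDist μ 1 (b * (L.take k).prod) ≤ dDist μ 1 (L.take k).prod + 1 :=
              dDist_mul_le hgen b _ hb
            _ ≤ t + 1 := Nat.add_le_add_right h1 1
        · rw [one_mul] at hc; rw [hc.2]
      rw [eP, if_pos hc, eP, if_pos hc']
    · rw [eP, if_neg hc]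
      exact eP_nonneg hpos _ b (b * w) L
  exact Summable.tsum_le_tsum hle
    (summable_eP hpos hfin hμ1 _ 1 w hw.1)
    (summable_eP hpos hfin hμ1 _ b (b * w) hbw)

include hfin in
lemma eps_extract {δ : ℝ} (S : Set G) (hSfin : S.Finite) (b : G)
    (hδ : epsRatio μ S 1 b ≤ δ) (x : G) (hx : x ∈ bdry μ S)
    (hν : 0 < exitProb μ S 1 x) :
    exitProb μ S b x ≤ (1 + δ) * exitProb μ S 1 x := by
  set f : G → ℝ := fun y => |exitProb μ S 1 y - exitProb μ S b y| / exitProb μ S 1 y with hf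
  have hmem : f x ∈ {r : ℝ | ∃ y ∈ bdry μ S, 0 < exitProb μ S 1 y ∧
      r = |exitProb μ S 1 y - exitProb μ S b y| / exitProb μ S 1 y} :=
    ⟨x, hx, hν, rfl⟩
  have hbdd : BddAbove {r : ℝ | ∃ y ∈ bdry μ S, 0 < exitProb μ S 1 y ∧
      r = |exitProb μ S 1 y - exitProb μ S b y| / exitProb μ S 1 y} := by
    apply Set.Finite.bddAbove
    apply Set.Finite.subset (Set.Finite.image f (bdry_finite hfin hSfin))
    rintro r ⟨y, hy, -, rfl⟩
    exact ⟨y, hy, rfl⟩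
  have hle : f x ≤ δ := le_trans (le_csSup hbdd hmem) hδ
  have habs : |exitProb μ S 1 x - exitProb μ S b x| ≤ δ * exitProb μ S 1 x := by
    rw [hf] at hle
    calc |exitProb μ S 1 x - exitProb μ S b x|
        = (|exitProb μ S 1 x - exitProb μ S b x| / exitProb μ S 1 x) * exitProb μ S 1 x := by
          field_simp
      _ ≤ δ * exitProb μ S 1 x := mul_le_mul_of_nonneg_right hle (le_of_lt hν)
  have := abs_le.1 habs
  linarith [this.1, this.2]

end Main

end BallGrowthAux

/-- If `ε(B(e,s); e, b) ≤ δ` for all `s > r₀` and all `b ∈ supp μ`, then the directed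
balls satisfy `|B(e,s)| ≤ C (1−δ)^{−s}` for some constant `C > 0`. -/
theorem ball_growth_bound_of_eps_small
    {G : Type*} [Group G] [Countable G] (μ : G → ℝ)
    (hpos : ∀ s : G, 0 ≤ μ s) (hfin : (Function.support μ).Finite)
    (hsum : ∑ᶠ s : G, μ s = 1)
    (hgen : ∀ g : G, ∃ L : List G, (∀ s ∈ L, 0 < μ s) ∧ L.prod = g)
    (δ : ℝ) (hδ0 : 0 < δ) (hδ1 : δ < 1) (r₀ : ℕ)
    (heps : ∀ s : ℕ, r₀ < s → ∀ b : G, 0 < μ b → epsRatio μ (dBall μ 1 s) 1 b ≤ δ) :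
    ∃ C : ℝ, 0 < C ∧ ∀ s : ℕ,
      ((dBall μ 1 s).ncard : ℝ) ≤ C * ((1 - δ) ^ s)⁻¹ := by
  classical
  set ρ : ℝ := 1 + δ with hρdef
  have hρ1 : 1 < ρ := by rw [hρdef]; linarith
  have hρ0 : 0 < ρ := by linarith
  have h1δ : 0 < 1 - δ := by linarith
  have hBfin : ∀ t : ℕ, (dBall μ 1 t).Finite := BallGrowthAux.dBall_finite hgen hfin
  have hbd : ∀ t : ℕ, (bdry μ (dBall μ 1 t)).Finite :=
    fun t => BallGrowthAux.bdry_finite hfin (hBfin t)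
  set ν : ℕ → G → ℝ := fun t x => exitProb μ (dBall μ 1 t) 1 x with hν
  set V : Set ℝ := insert 1 ((fun x => ν r₀ x) '' bdry μ (dBall μ 1 r₀)) with hV
  have hVfin : V.Finite := Set.Finite.insert 1 (Set.Finite.image _ (hbd r₀))
  have hVne : V.Nonempty := ⟨1, Set.mem_insert _ _⟩
  set c₀ : ℝ := sInf V with hc₀
  have hc₀mem : c₀ ∈ V := Set.Nonempty.csInf_mem hVne hVfin
  have hc₀pos : 0 < c₀ := by
    rcases Set.mem_insert_iff.1 hc₀mem with h | ⟨x, hx, h⟩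
    · rw [h]; norm_num
    · rw [← h]
      exact BallGrowthAux.exitProb_pos_of_bdry hpos hfin hsum hgen r₀ x hx
  have hc₀le : ∀ x ∈ bdry μ (dBall μ 1 r₀), c₀ ≤ ν r₀ x := fun x hx =>
    csInf_le (Set.Finite.bddBelow hVfin) (Set.mem_insert_iff.2 (Or.inr ⟨x, hx, rfl⟩))
  -- key pointwise lower bound on exit probabilities
  have key : ∀ j : ℕ, ∀ x ∈ bdry μ (dBall μ 1 (r₀ + j)),
      c₀ * (ρ⁻¹) ^ j ≤ ν (r₀ + j) x := by
    intro j
    induction j with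
    | zero =>
      intro x hx
      simpa using hc₀le x hx
    | succ j ih =>
      intro x hx
      have hd : dDist μ 1 x = (r₀ + (j + 1)) + 1 := BallGrowthAux.dDist_of_bdry hgen _ x hx
      obtain ⟨L, hlen, hLpos, hLprod⟩ := BallGrowthAux.dDist_spec hgen 1 x
      rw [hd] at hlen
      cases L with
      | nil => simp at hlen
      | cons b M =>
        have hb : 0 < μ b := hLpos b (by simp)
        have hMpos : ∀ s ∈ M, 0 < μ s := fun s hs => hLpos s (by simp [hs])
        set w := M.prod with hw
        have hx_eq : x = b * w := by
          rw [one_mul] at hLprod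
          rw [← hLprod, List.prod_cons]
        have hlenM : M.length = r₀ + j + 1 := by
          simp only [List.length_cons] at hlen
          omega
        have hdw_le : dDist μ 1 w ≤ r₀ + j + 1 := by
          have := BallGrowthAux.dDist_le' 1 w M hMpos (one_mul _)
          omega
        have hdw_ge : r₀ + j + 1 ≤ dDist μ 1 w := by
          by_contra h
          push_neg at h
          have h2 := BallGrowthAux.dDist_mul_le hgen b w hb
          rw [← hx_eq] at h2
          omega
        have hdw : dDist μ 1 w = (r₀ + j) + 1 := le_antisymm hdw_le hdw_ge
        have hwbd : w ∈ bdry μ (dBall μ 1 (r₀ + j)) :=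
          BallGrowthAux.bdry_of_dDist hgen _ w hdw
        have hIH := ih w hwbd
        have hxnot : b * w ∉ dBall μ 1 ((r₀ + j) + 1) := by
          rw [← hx_eq]; exact hx.1
        have hstep := BallGrowthAux.exit_step hpos hfin hsum hgen (r₀ + j) b w hb hwbd hxnot
        have hxpos : 0 < ν (r₀ + (j + 1)) x :=
          BallGrowthAux.exitProb_pos_of_bdry hpos hfin hsum hgen _ x hx
        have heq : epsRatio μ (dBall μ 1 (r₀ + j + 1)) 1 b ≤ δ :=
          heps (r₀ + j + 1) (by omega) b hb
        have hext := BallGrowthAux.eps_extract hfin (dBall μ 1 (r₀ + j + 1)) (hBfin _)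
          b heq x hx hxpos
        have hchain : c₀ * ρ⁻¹ ^ j ≤ ρ * ν (r₀ + (j + 1)) x := by
          refine le_trans hIH (le_trans hstep ?_)
          rw [← hx_eq]
          exact hext
        have hinv : (0:ℝ) ≤ ρ⁻¹ := le_of_lt (inv_pos.2 hρ0)
        calc c₀ * ρ⁻¹ ^ (j + 1) = (c₀ * ρ⁻¹ ^ j) * ρ⁻¹ := by ring
          _ ≤ (ρ * ν (r₀ + (j + 1)) x) * ρ⁻¹ := mul_le_mul_of_nonneg_right hchain hinv
          _ = ν (r₀ + (j + 1)) x := by field_simp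
  -- boundary cardinality bound
  have hbdcard : ∀ j : ℕ, ((bdry μ (dBall μ 1 (r₀ + j))).ncard : ℝ) ≤ ρ ^ j / c₀ := by
    intro j
    set T : Finset G := (hbd (r₀ + j)).toFinset with hT
    have hTmem : ∀ x, x ∈ T ↔ x ∈ bdry μ (dBall μ 1 (r₀ + j)) := by
      intro x; rw [hT, Set.Finite.mem_toFinset]
    have hsum1 := BallGrowthAux.sum_exitProb_le_one hpos hfin hsum (dBall μ 1 (r₀ + j)) 1 T
      (fun x hx => ((hTmem x).1 hx).1)
    have hcard : (T.card : ℝ) * (c₀ * ρ⁻¹ ^ j) ≤ 1 := by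
      calc (T.card : ℝ) * (c₀ * ρ⁻¹ ^ j) = ∑ _x ∈ T, c₀ * ρ⁻¹ ^ j := by
            rw [Finset.sum_const, nsmul_eq_mul]
        _ ≤ ∑ x ∈ T, ν (r₀ + j) x := Finset.sum_le_sum fun x hx => key j x ((hTmem x).1 hx)
        _ ≤ 1 := hsum1
    have hncard : ((bdry μ (dBall μ 1 (r₀ + j))).ncard : ℝ) = (T.card : ℝ) := by
      rw [hT, ← Set.ncard_coe_finset ((hbd (r₀ + j)).toFinset), Set.Finite.coe_toFinset]
    rw [inv_pow] at hcard
    rw [hncard, div_eq_mul_inv]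
    have hpj : (0:ℝ) < ρ ^ j := pow_pos hρ0 j
    have h3 : (T.card : ℝ) = ((T.card : ℝ) * (c₀ * (ρ ^ j)⁻¹)) * (ρ ^ j * c₀⁻¹) := by
      field_simp
    rw [h3]
    refine le_trans (mul_le_mul_of_nonneg_right hcard (by positivity)) (le_of_eq (one_mul _))
  -- ball cardinality recursion
  have hball : ∀ j : ℕ, ((dBall μ 1 (r₀ + j)).ncard : ℝ) ≤
      ((dBall μ 1 r₀).ncard : ℝ) + ∑ i ∈ Finset.range j, ρ ^ i / c₀ := by
    intro j
    induction j with
    | zero => simp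
    | succ j ih =>
      have hsub := BallGrowthAux.dBall_succ_subset hgen (r₀ + j)
      have h1 : (dBall μ 1 (r₀ + (j + 1))).ncard ≤
          (dBall μ 1 (r₀ + j)).ncard + (bdry μ (dBall μ 1 (r₀ + j))).ncard := by
        refine le_trans (Set.ncard_le_ncard hsub ((hBfin _).union (hbd _))) ?_
        exact Set.ncard_union_le _ _
      have h1' : ((dBall μ 1 (r₀ + (j + 1))).ncard : ℝ) ≤
          ((dBall μ 1 (r₀ + j)).ncard : ℝ) + ((bdry μ (dBall μ 1 (r₀ + j))).ncard : ℝ) := by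
        exact_mod_cast h1
      rw [Finset.sum_range_succ]
      calc ((dBall μ 1 (r₀ + (j + 1))).ncard : ℝ)
          ≤ ((dBall μ 1 (r₀ + j)).ncard : ℝ) + ((bdry μ (dBall μ 1 (r₀ + j))).ncard : ℝ) := h1'
        _ ≤ (((dBall μ 1 r₀).ncard : ℝ) + ∑ i ∈ Finset.range j, ρ ^ i / c₀) + ρ ^ j / c₀ :=
            add_le_add ih (hbdcard j)
        _ = ((dBall μ 1 r₀).ncard : ℝ) + (∑ i ∈ Finset.range j, ρ ^ i / c₀ + ρ ^ j / c₀) := by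
            ring
  -- geometric sum bound
  have hgeom : ∀ j : ℕ, ∑ i ∈ Finset.range j, ρ ^ i / c₀ ≤ ρ ^ j / (c₀ * δ) := by
    intro j
    have h1 : ∑ i ∈ Finset.range j, ρ ^ i = (ρ ^ j - 1) / δ := by
      rw [geom_sum_eq (ne_of_gt hρ1)]
      congr 1
      rw [hρdef]; ring
    have h2 : ∑ i ∈ Finset.range j, ρ ^ i / c₀ = (∑ i ∈ Finset.range j, ρ ^ i) / c₀ := by
      rw [Finset.sum_div]
    rw [h2, h1, div_div, mul_comm δ c₀]
    gcongr
    linarith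
  -- final assembly
  set K : ℝ := ((dBall μ 1 r₀).ncard : ℝ) with hK
  have hK0 : 0 ≤ K := Nat.cast_nonneg _
  have hcδ : 0 < c₀ * δ := mul_pos hc₀pos hδ0
  have hinv1 : 1 ≤ (1 - δ)⁻¹ := by
    have h := mul_inv_cancel₀ (ne_of_gt h1δ)
    have hpos' : 0 < (1 - δ)⁻¹ := inv_pos.2 h1δ
    nlinarith
  have hρle : ρ ≤ (1 - δ)⁻¹ := by
    have h : (1 + δ) * (1 - δ) ≤ 1 := by nlinarith
    have := (le_div_iff₀ h1δ).2 h
    rw [hρdef, ← one_div]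
    exact this
  refine ⟨K + 1 / (c₀ * δ) + 1, by positivity, ?_⟩
  intro s
  have hIs : ((1 - δ) ^ s)⁻¹ = ((1 - δ)⁻¹) ^ s := by rw [inv_pow]
  have hI1 : 1 ≤ ((1 - δ)⁻¹) ^ s := one_le_pow₀ hinv1
  rw [hIs]
  rcases le_or_gt s r₀ with hs | hs
  · have hsub : dBall μ 1 s ⊆ dBall μ 1 r₀ := fun g hg => le_trans hg hs
    have h1 : ((dBall μ 1 s).ncard : ℝ) ≤ K := by
      rw [hK]
      exact_mod_cast Set.ncard_le_ncard hsub (hBfin r₀)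
    have h2 : K ≤ K * ((1 - δ)⁻¹) ^ s := le_mul_of_one_le_right hK0 hI1
    have h3 : (0:ℝ) ≤ 1 / (c₀ * δ) * ((1 - δ)⁻¹) ^ s := by positivity
    have h4 : (0:ℝ) ≤ 1 * ((1 - δ)⁻¹) ^ s := by positivity
    calc ((dBall μ 1 s).ncard : ℝ) ≤ K := h1
      _ ≤ K * ((1 - δ)⁻¹) ^ s + 1 / (c₀ * δ) * ((1 - δ)⁻¹) ^ s + 1 * ((1 - δ)⁻¹) ^ s := by
          linarith
      _ = (K + 1 / (c₀ * δ) + 1) * ((1 - δ)⁻¹) ^ s := by ring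
  · obtain ⟨j, rfl⟩ : ∃ j, s = r₀ + j := ⟨s - r₀, by omega⟩
    have h1 : ((dBall μ 1 (r₀ + j)).ncard : ℝ) ≤ K + ρ ^ j / (c₀ * δ) :=
      le_trans (hball j) (by linarith [hgeom j])
    have h5 : ρ ^ j ≤ ((1 - δ)⁻¹) ^ (r₀ + j) := by
      calc ρ ^ j ≤ ((1 - δ)⁻¹) ^ j := pow_le_pow_left₀ (le_of_lt hρ0) hρle j
        _ ≤ ((1 - δ)⁻¹) ^ (r₀ + j) := pow_le_pow_right₀ hinv1 (by omega)
    have h2 : K ≤ K * ((1 - δ)⁻¹) ^ (r₀ + j) := le_mul_of_one_le_right hK0 hI1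
    have h7 : ρ ^ j / (c₀ * δ) ≤ 1 / (c₀ * δ) * ((1 - δ)⁻¹) ^ (r₀ + j) := by
      rw [div_eq_mul_inv, mul_comm]
      refine mul_le_mul_of_nonneg_left h5 (by positivity) |>.trans_eq' ?_
      ring
    have h4 : (0:ℝ) ≤ 1 * ((1 - δ)⁻¹) ^ (r₀ + j) := by positivity
    calc ((dBall μ 1 (r₀ + j)).ncard : ℝ) ≤ K + ρ ^ j / (c₀ * δ) := h1
      _ ≤ K * ((1 - δ)⁻¹) ^ (r₀ + j) + 1 / (c₀ * δ) * ((1 - δ)⁻¹) ^ (r₀ + j)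
          + 1 * ((1 - δ)⁻¹) ^ (r₀ + j) := by linarith
      _ = (K + 1 / (c₀ * δ) + 1) * ((1 - δ)⁻¹) ^ (r₀ + j) := by ring
end

section
/- Let e be the identity of G, and suppose that for every b ∈ supp(μ) one has ε(B(e,r); e, b) → 0 as r → ∞. Then the directed balls grow subexponentially: for every c > 1 there exists a constant C > 0 such that |B(e,s)| ≤ C·c^s for every s ∈ ℕ. -/
open Classical Finset

namespace RWaux
set_option linter.unusedSectionVars false

variable {G : Type*} [Group G]

/-- weight of a step list -/
noncomputable def wt (μ : G → ℝ) (L : List G) : ℝ := (L.map μ).prod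

lemma wt_nonneg {μ : G → ℝ} (hpos : ∀ s, 0 ≤ μ s) (L : List G) : 0 ≤ wt μ L := by
  apply List.prod_nonneg
  intro x hx
  rcases List.mem_map.1 hx with ⟨s, _, rfl⟩
  exact hpos s

lemma wt_append (μ : G → ℝ) (L M : List G) : wt μ (L ++ M) = wt μ L * wt μ M := by
  simp [wt]

lemma wt_cons (μ : G → ℝ) (a : G) (L : List G) : wt μ (a :: L) = μ a * wt μ L := by
  simp [wt]

lemma mem_of_wt_ne_zero {μ : G → ℝ} {L : List G} (h : wt μ L ≠ 0) :
    ∀ s ∈ L, μ s ≠ 0 := by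
  intro s hs hz
  exact h (List.prod_eq_zero (List.mem_map.2 ⟨s, hs, hz⟩))

/-- all lists of length `n` with entries in `A` -/
noncomputable def lists (A : Finset G) : ℕ → Finset (List G)
  | 0 => {([] : List G)}
  | n + 1 => A.biUnion fun a => (lists A n).image (List.cons a)

lemma mem_lists {A : Finset G} : ∀ {n : ℕ} {L : List G},
    L ∈ lists A n ↔ L.length = n ∧ ∀ s ∈ L, s ∈ A := by
  intro n
  induction n with
  | zero =>
    intro L
    simp only [lists, Finset.mem_singleton]
    constructor
    · rintro rfl; simp
    · rintro ⟨h, -⟩; exact List.length_eq_zero_iff.1 h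
  | succ n ih =>
    intro L
    simp only [lists, Finset.mem_biUnion, Finset.mem_image]
    constructor
    · rintro ⟨a, ha, M, hM, rfl⟩
      obtain ⟨hlen, hmem⟩ := ih.1 hM
      refine ⟨by simp [hlen], ?_⟩
      intro s hs
      rcases List.mem_cons.1 hs with rfl | hs
      · exact ha
      · exact hmem s hs
    · rintro ⟨hlen, hmem⟩
      cases L with
      | nil => simp at hlen
      | cons a M =>
        refine ⟨a, hmem a (by simp), M, ih.2 ⟨by simpa using hlen, fun s hs => hmem s (by simp [hs])⟩, rfl⟩

lemma sum_wt_lists {μ : G → ℝ} {A : Finset G} (hs : ∑ a ∈ A, μ a = 1) :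
    ∀ n : ℕ, ∑ L ∈ lists A n, wt μ L = 1 := by
  intro n
  induction n with
  | zero => simp [lists, wt]
  | succ n ih =>
    have hdisj : (↑A : Set G).PairwiseDisjoint fun a => (lists A n).image (List.cons a) := by
      intro a _ b _ hab
      simp only [Function.onFun, Finset.disjoint_left]
      intro L hL hL'
      rcases Finset.mem_image.1 hL with ⟨M, _, rfl⟩
      rcases Finset.mem_image.1 hL' with ⟨M', _, hM'⟩
      exact hab (List.head_eq_of_cons_eq hM'.symm)
    rw [lists, Finset.sum_biUnion hdisj]
    have : ∀ a ∈ A, ∑ L ∈ (lists A n).image (List.cons a), wt μ L = μ a := by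
      intro a _
      rw [Finset.sum_image (fun x _ y _ h => List.cons_injective h)]
      simp only [wt_cons, ← Finset.mul_sum, ih, mul_one]
    rw [Finset.sum_congr rfl this, hs]

/-- the path stays inside `S` at all proper-prefix positions -/
def stays (S : Set G) (a : G) (L : List G) : Prop :=
  ∀ k < L.length, a * (L.take k).prod ∈ S

/-- exit-anywhere weight function -/
noncomputable def xg (μ : G → ℝ) (S : Set G) (a : G) (L : List G) : ℝ :=
  if stays S a L ∧ a * L.prod ∉ S then wt μ L else 0

noncomputable def xf (μ : G → ℝ) (S : Set G) (a x : G) (L : List G) : ℝ :=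
  if stays S a L ∧ a * L.prod = x then wt μ L else 0

lemma stays_of_prefix_eq {S : Set G} {a : G} {L L' : List G}
    (hL' : stays S a L') (hout : a * L.prod ∉ S) (hpre : L <+: L') : L = L' := by
  rcases eq_or_ne L.length L'.length with hlen | hlen
  · exact hpre.eq_of_length hlen
  · have hlt : L.length < L'.length := lt_of_le_of_ne hpre.length_le hlen
    have := hL' L.length hlt
    rw [List.prefix_iff_eq_take.1 hpre] at hout
    exact absurd this hout

/-- partial sums of the exit weights are at most 1 -/
lemma sum_xg_le {μ : G → ℝ} (hpos : ∀ s, 0 ≤ μ s) (hfin : (Function.support μ).Finite)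
    (hsum : ∑ᶠ s : G, μ s = 1) (S : Set G) (a : G) (F : Finset (List G)) :
    ∑ L ∈ F, xg μ S a L ≤ 1 := by
  classical
  set A : Finset G := hfin.toFinset with hA
  have hsA : ∑ s ∈ A, μ s = 1 := by
    rw [← hsum]
    exact (finsum_eq_sum_of_support_subset μ (by simp [hA])).symm
  set n : ℕ := F.sup List.length with hn
  set P : List G → Prop := fun L => stays S a L ∧ a * L.prod ∉ S with hP
  set F' : Finset (List G) := F.filter (fun L => P L ∧ wt μ L ≠ 0) with hF'
  have hstep : ∑ L ∈ F, xg μ S a L = ∑ L ∈ F', wt μ L := by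
    rw [hF', ← Finset.sum_filter_of_ne (p := fun L => P L ∧ wt μ L ≠ 0)]
    · apply Finset.sum_congr rfl
      intro L hL
      rw [Finset.mem_filter] at hL
      exact if_pos hL.2.1
    · intro L _ hne
      unfold P
      unfold xg at hne
      by_cases h : stays S a L ∧ a * L.prod ∉ S
      · refine ⟨h, ?_⟩; rwa [if_pos h] at hne
      · rw [if_neg h] at hne; exact absurd rfl hne
  rw [hstep]
  -- extension machinery
  set E : List G → Finset (List G) := fun L => (lists A (n - L.length)).image (fun M => L ++ M)
    with hE
  have hEsum : ∀ L ∈ F', ∑ N ∈ E L, wt μ N = wt μ L := by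
    intro L _
    rw [hE]
    rw [Finset.sum_image (fun x _ y _ h => List.append_cancel_left h)]
    simp only [wt_append]
    rw [← Finset.mul_sum, sum_wt_lists hsA, mul_one]
  have hEsub : ∀ L ∈ F', E L ⊆ lists A n := by
    intro L hL
    rw [hF', Finset.mem_filter] at hL
    obtain ⟨hLF, _, hw⟩ := hL
    intro N hN
    rw [hE] at hN
    rcases Finset.mem_image.1 hN with ⟨M, hM, rfl⟩
    obtain ⟨hMlen, hMmem⟩ := mem_lists.1 hM
    have hLlen : L.length ≤ n := Finset.le_sup hLF
    refine mem_lists.2 ⟨by simp [hMlen]; omega, ?_⟩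
    intro s hs
    rcases List.mem_append.1 hs with hs | hs
    · simpa [hA] using mem_of_wt_ne_zero hw s hs
    · exact hMmem s hs
  have hdisj : (↑F' : Set (List G)).PairwiseDisjoint E := by
    intro L hL L' hL' hne
    simp only [Function.onFun, Finset.disjoint_left]
    intro N hN hN'
    rw [hE] at hN hN'
    rcases Finset.mem_image.1 hN with ⟨M, _, rfl⟩
    rcases Finset.mem_image.1 hN' with ⟨M', _, hMM⟩
    rw [hF', Finset.coe_filter, Set.mem_setOf_eq] at hL hL'
    have hpre : L <+: L' ∨ L' <+: L :=
      List.prefix_or_prefix_of_prefix ⟨M, rfl⟩ ⟨M', hMM⟩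
    rcases hpre with h | h
    · exact hne (stays_of_prefix_eq hL'.2.1.1 hL.2.1.2 h)
    · exact hne (stays_of_prefix_eq hL.2.1.1 hL'.2.1.2 h).symm
  calc ∑ L ∈ F', wt μ L = ∑ L ∈ F', ∑ N ∈ E L, wt μ N := by
        exact (Finset.sum_congr rfl hEsum).symm
    _ = ∑ N ∈ F'.biUnion E, wt μ N := (Finset.sum_biUnion hdisj).symm
    _ ≤ ∑ N ∈ lists A n, wt μ N := by
        apply Finset.sum_le_sum_of_subset_of_nonneg
        · intro N hN
          rcases Finset.mem_biUnion.1 hN with ⟨L, hL, hNL⟩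
          exact hEsub L hL hNL
        · intro N _ _
          exact wt_nonneg hpos N
    _ = 1 := sum_wt_lists hsA n

lemma xg_nonneg {μ : G → ℝ} (hpos : ∀ s, 0 ≤ μ s) (S : Set G) (a : G) (L : List G) :
    0 ≤ xg μ S a L := by
  unfold xg; split
  · exact wt_nonneg hpos L
  · exact le_refl 0

section ExitProb

variable {μ : G → ℝ}

lemma exitProb_eq (S : Set G) (a x : G) :
    exitProb μ S a x = ∑' L : List G, xf μ S a x L :=
  tsum_congr fun _ => if_congr Iff.rfl rfl rfl

lemma xf_nonneg (hpos : ∀ s, 0 ≤ μ s) (S : Set G) (a x : G) (L : List G) : 0 ≤ xf μ S a x L := by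
  unfold xf; split
  · exact wt_nonneg hpos L
  · exact le_refl 0

variable (hpos : ∀ s, 0 ≤ μ s) (hfin : (Function.support μ).Finite)
    (hsum : ∑ᶠ s : G, μ s = 1)
include hpos hfin hsum

lemma summable_xg (S : Set G) (a : G) : Summable (xg μ S a) :=
  summable_of_sum_le (fun L => xg_nonneg hpos S a L) (sum_xg_le hpos hfin hsum S a)

lemma xf_le_xg (S : Set G) (a : G) {x : G} (hx : x ∉ S) (L : List G) :
    xf μ S a x L ≤ xg μ S a L := by
  unfold xf xg
  by_cases h : stays S a L ∧ a * L.prod = x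
  · rw [if_pos h, if_pos ⟨h.1, h.2 ▸ hx⟩]
  · rw [if_neg h]
    exact xg_nonneg hpos S a L

lemma summable_xf (S : Set G) (a : G) {x : G} (hx : x ∉ S) : Summable (xf μ S a x) :=
  Summable.of_nonneg_of_le (xf_nonneg hpos S a x) (xf_le_xg hpos hfin hsum S a hx)
    (summable_xg hpos hfin hsum S a)

lemma exitProb_nonneg (S : Set G) (a x : G) : 0 ≤ exitProb μ S a x := by
  rw [exitProb_eq]
  exact tsum_nonneg (xf_nonneg hpos S a x)

lemma single_le_exitProb (S : Set G) (a : G) {x : G} (hx : x ∉ S) {L : List G}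
    (h : stays S a L ∧ a * L.prod = x) : wt μ L ≤ exitProb μ S a x := by
  rw [exitProb_eq]
  have := Summable.le_tsum (summable_xf hpos hfin hsum S a hx) L
    (fun j _ => xf_nonneg hpos S a x j)
  rwa [xf, if_pos h] at this

lemma sum_exitProb_le (S : Set G) (a : G) (T : Finset G) (hT : ∀ x ∈ T, x ∉ S) :
    ∑ x ∈ T, exitProb μ S a x ≤ 1 := by
  have h1 : ∑ x ∈ T, exitProb μ S a x = ∑' L : List G, ∑ x ∈ T, xf μ S a x L := by
    rw [Finset.sum_congr rfl (fun x _ => exitProb_eq S a x)]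
    exact (Summable.tsum_finsetSum (fun x hx => summable_xf hpos hfin hsum S a (hT x hx))).symm
  rw [h1]
  have hpt : ∀ L : List G, ∑ x ∈ T, xf μ S a x L ≤ xg μ S a L := by
    intro L
    by_cases hst : stays S a L ∧ a * L.prod ∈ T
    · rw [Finset.sum_eq_single_of_mem (a * L.prod) hst.2 (fun x hx hne => by
        unfold xf
        rw [if_neg]
        rintro ⟨-, rfl⟩
        exact hne rfl)]
      unfold xf xg
      rw [if_pos ⟨hst.1, rfl⟩, if_pos ⟨hst.1, hT _ hst.2⟩]
    · have : ∀ x ∈ T, xf μ S a x L = 0 := by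
        intro x hx
        unfold xf
        rw [if_neg]
        rintro ⟨h1', rfl⟩
        exact hst ⟨h1', hx⟩
      rw [Finset.sum_congr rfl this, Finset.sum_const_zero]
      exact xg_nonneg hpos S a L
  calc ∑' L : List G, ∑ x ∈ T, xf μ S a x L ≤ ∑' L, xg μ S a L := by
        apply Summable.tsum_le_tsum hpt
        · exact summable_sum (fun x hx => summable_xf hpos hfin hsum S a (hT x hx))
        · exact summable_xg hpos hfin hsum S a
    _ ≤ 1 := Summable.tsum_le_of_sum_le (summable_xg hpos hfin hsum S a)
        (sum_xg_le hpos hfin hsum S a)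

lemma exitProb_mono_set {S S' : Set G} (hSS : S ⊆ S') (a : G) {x : G} (hx : x ∉ S') :
    exitProb μ S a x ≤ exitProb μ S' a x := by
  rw [exitProb_eq, exitProb_eq]
  apply Summable.tsum_le_tsum _ (summable_xf hpos hfin hsum S a (fun h => hx (hSS h)))
    (summable_xf hpos hfin hsum S' a hx)
  intro L
  unfold xf
  by_cases h : stays S a L ∧ a * L.prod = x
  · rw [if_pos h, if_pos ⟨fun k hk => hSS (h.1 k hk), h.2⟩]
  · rw [if_neg h]
    exact xf_nonneg hpos S' a x L

end ExitProb

lemma exitProb_translate (μ : G → ℝ) (S : Set G) (b x : G) :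
    exitProb μ ((b * ·) '' S) b (b * x) = exitProb μ S 1 x := by
  apply tsum_congr
  intro L
  apply if_congr _ rfl rfl
  constructor
  · rintro ⟨hst, hprod⟩
    refine ⟨fun k hk => ?_, by rw [one_mul]; exact mul_left_cancel hprod⟩
    rcases hst k hk with ⟨y, hy, he⟩
    rw [one_mul]
    rwa [← mul_left_cancel he]
  · rintro ⟨hst, hprod⟩
    refine ⟨fun k hk => ⟨(L.take k).prod, by simpa using hst k hk, rfl⟩, ?_⟩
    rw [one_mul] at hprod
    rw [hprod]

section Geometry

variable {μ : G → ℝ}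

lemma dDist_nonempty (hgen : ∀ g : G, ∃ L : List G, (∀ s ∈ L, 0 < μ s) ∧ L.prod = g) (g : G) :
    {k : ℕ | ∃ L : List G, L.length = k ∧ (∀ s ∈ L, 0 < μ s) ∧ (1 : G) * L.prod = g}.Nonempty := by
  obtain ⟨L, hL, hLp⟩ := hgen g
  exact ⟨L.length, L, rfl, hL, by rwa [one_mul]⟩

lemma exists_geodesic (hgen : ∀ g : G, ∃ L : List G, (∀ s ∈ L, 0 < μ s) ∧ L.prod = g) (g : G) :
    ∃ L : List G, L.length = dDist μ 1 g ∧ (∀ s ∈ L, 0 < μ s) ∧ L.prod = g := by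
  obtain ⟨L, h1, h2, h3⟩ := Nat.sInf_mem (dDist_nonempty hgen g)
  exact ⟨L, h1, h2, by rwa [one_mul] at h3⟩

lemma dDist_le_of_list {L : List G} (hL : ∀ s ∈ L, 0 < μ s) {g : G} (hprod : L.prod = g) :
    dDist μ 1 g ≤ L.length :=
  Nat.sInf_le ⟨L, rfl, hL, by rwa [one_mul]⟩

lemma one_mem_dBall (r : ℕ) : (1 : G) ∈ dBall μ 1 r := by
  have h0 : dDist μ 1 (1 : G) ≤ ([] : List G).length :=
    dDist_le_of_list (by simp) (by simp)
  simp only [List.length_nil, Nat.le_zero] at h0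
  simp [dBall, h0]

lemma mem_dBall_zero (hgen : ∀ g : G, ∃ L : List G, (∀ s ∈ L, 0 < μ s) ∧ L.prod = g)
    {g : G} (hg : g ∈ dBall μ 1 0) : g = 1 := by
  obtain ⟨L, h1, -, h3⟩ := exists_geodesic hgen g
  have : dDist μ 1 g = 0 := Nat.le_zero.1 hg
  rw [this] at h1
  rw [← h3, List.length_eq_zero_iff.1 h1, List.prod_nil]

lemma dBall_mono {r r' : ℕ} (h : r ≤ r') : dBall μ 1 r ⊆ dBall μ (1 : G) r' :=
  fun _ hg => le_trans hg h

lemma smul_dBall_subset (hgen : ∀ g : G, ∃ L : List G, (∀ s ∈ L, 0 < μ s) ∧ L.prod = g)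
    {b : G} (hb : 0 < μ b) (r : ℕ) :
    (b * ·) '' (dBall μ 1 r) ⊆ dBall μ 1 (r + 1) := by
  rintro _ ⟨g, hg, rfl⟩
  obtain ⟨L, h1, h2, h3⟩ := exists_geodesic hgen g
  have : dDist μ 1 (b * g) ≤ (b :: L).length := by
    apply dDist_le_of_list
    · intro s hs
      rcases List.mem_cons.1 hs with rfl | hs
      · exact hb
      · exact h2 s hs
    · rw [List.prod_cons, h3]
  refine le_trans this ?_
  simp only [List.length_cons, h1]
  exact Nat.succ_le_succ hg

lemma dBall_finite (hfin : (Function.support μ).Finite)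
    (hgen : ∀ g : G, ∃ L : List G, (∀ s ∈ L, 0 < μ s) ∧ L.prod = g) (r : ℕ) :
    (dBall μ 1 r).Finite := by
  have hsub : dBall μ 1 r ⊆
      ↑((Finset.range (r + 1)).biUnion fun k => (lists hfin.toFinset k).image List.prod) := by
    intro g hg
    obtain ⟨L, h1, h2, h3⟩ := exists_geodesic hgen g
    simp only [Finset.coe_biUnion, Finset.coe_image, Set.mem_iUnion, Set.mem_image,
      Finset.mem_coe, Finset.mem_range]
    refine ⟨L.length, by rw [h1]; exact Nat.lt_succ_of_le hg, L, ?_, h3⟩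
    refine mem_lists.2 ⟨rfl, fun s hs => ?_⟩
    simp only [Set.Finite.mem_toFinset, Function.mem_support]
    exact ne_of_gt (h2 s hs)
  exact Set.Finite.subset (Finset.finite_toSet _) hsub
end Geometry
section Geometry2

variable {μ : G → ℝ}

lemma bdry_finite (hfin : (Function.support μ).Finite) {S : Set G} (hS : S.Finite) :
    (bdry μ S).Finite := by
  have hsub : bdry μ S ⊆ (fun p : G × G => p.1 * p.2) '' (S ×ˢ Function.support μ) := by
    rintro x ⟨-, y, hy, hpos⟩
    exact ⟨(y, y⁻¹ * x), ⟨hy, ne_of_gt hpos⟩, by simp⟩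
  exact Set.Finite.subset ((hS.prod hfin).image _) hsub

lemma abs_le_epsRatio (hfin : (Function.support μ).Finite) {S : Set G} (hS : S.Finite)
    {x : G} (hx : x ∈ bdry μ S) (hpx : 0 < exitProb μ S 1 x) (b : G) :
    |exitProb μ S 1 x - exitProb μ S b x| ≤ epsRatio μ S 1 b * exitProb μ S 1 x := by
  have hbdd : BddAbove {r : ℝ | ∃ x ∈ bdry μ S, 0 < exitProb μ S 1 x ∧
      r = |exitProb μ S 1 x - exitProb μ S b x| / exitProb μ S 1 x} := by
    apply Set.Finite.bddAbove
    apply Set.Finite.subset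
      (((bdry_finite hfin hS).image
        (fun x => |exitProb μ S 1 x - exitProb μ S b x| / exitProb μ S 1 x)))
    rintro r ⟨x, hx', -, rfl⟩
    exact ⟨x, hx', rfl⟩
  have hmem : |exitProb μ S 1 x - exitProb μ S b x| / exitProb μ S 1 x ≤ epsRatio μ S 1 b :=
    le_csSup hbdd ⟨x, hx, hpx, rfl⟩
  calc |exitProb μ S 1 x - exitProb μ S b x|
      = (|exitProb μ S 1 x - exitProb μ S b x| / exitProb μ S 1 x) * exitProb μ S 1 x := by
        field_simp
    _ ≤ epsRatio μ S 1 b * exitProb μ S 1 x := by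
        apply mul_le_mul_of_nonneg_right hmem (le_of_lt hpx)

lemma stays_dBall {L : List G} (hL : ∀ s ∈ L, 0 < μ s) {r : ℕ} (hlen : L.length ≤ r + 1) :
    stays (dBall μ 1 r) 1 L := by
  intro k hk
  rw [one_mul]
  show dDist μ 1 (L.take k).prod ≤ r
  have h1 : dDist μ 1 (L.take k).prod ≤ (L.take k).length :=
    dDist_le_of_list (fun s hs => hL s (List.take_subset k L hs)) rfl
  refine le_trans h1 ?_
  rw [List.length_take]
  omega

lemma sphere_not_mem {x : G} {r : ℕ} (hx : dDist μ 1 x = r + 1) : x ∉ dBall μ 1 r := by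
  intro h
  rw [dBall, Set.mem_setOf_eq, hx] at h
  omega

lemma exitProb_sphere_pos (hpos : ∀ s, 0 ≤ μ s) (hfin : (Function.support μ).Finite)
    (hsum : ∑ᶠ s : G, μ s = 1)
    (hgen : ∀ g : G, ∃ L : List G, (∀ s ∈ L, 0 < μ s) ∧ L.prod = g)
    {x : G} {r : ℕ} (hx : dDist μ 1 x = r + 1) :
    0 < exitProb μ (dBall μ 1 r) 1 x := by
  obtain ⟨L, h1, h2, h3⟩ := exists_geodesic hgen x
  rw [hx] at h1
  have hwt : 0 < wt μ L := by
    apply List.prod_pos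
    intro a ha
    rcases List.mem_map.1 ha with ⟨s, hs, rfl⟩
    exact h2 s hs
  refine lt_of_lt_of_le hwt
    (single_le_exitProb hpos hfin hsum _ 1 (sphere_not_mem hx) ⟨?_, by rwa [one_mul]⟩)
  exact stays_dBall h2 (le_of_eq h1)

lemma sphere_mem_bdry (hgen : ∀ g : G, ∃ L : List G, (∀ s ∈ L, 0 < μ s) ∧ L.prod = g)
    {x : G} {r : ℕ} (hx : dDist μ 1 x = r + 1) : x ∈ bdry μ (dBall μ 1 r) := by
  refine ⟨sphere_not_mem hx, ?_⟩
  obtain ⟨L, h1, h2, h3⟩ := exists_geodesic hgen x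
  rw [hx] at h1
  have hne : L ≠ [] := by
    intro h
    rw [h] at h1
    simp at h1
  refine ⟨L.dropLast.prod, ?_, ?_⟩
  · show dDist μ 1 L.dropLast.prod ≤ r
    have := dDist_le_of_list (fun s hs => h2 s (List.dropLast_subset L hs))
      (rfl : L.dropLast.prod = _)
    refine le_trans this ?_
    rw [List.length_dropLast, h1]
    omega
  · have hsplit : L.dropLast ++ [L.getLast hne] = L := List.dropLast_append_getLast hne
    have : L.dropLast.prod⁻¹ * x = L.getLast hne := by
      rw [← h3]
      conv_lhs => rw [← hsplit]
      simp
    rw [this]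
    exact h2 _ (List.getLast_mem hne)

end Geometry2
section Main

variable {μ : G → ℝ} (hpos : ∀ s : G, 0 ≤ μ s) (hfin : (Function.support μ).Finite)
    (hsum : ∑ᶠ s : G, μ s = 1)
    (hgen : ∀ g : G, ∃ L : List G, (∀ s ∈ L, 0 < μ s) ∧ L.prod = g)

include hpos hfin hsum hgen

/-- Step: from a sphere point at level `r+2`, find a first step `b` and point `z`
with `exitProb (B r) 1 z ≤ exitProb (B (r+1)) b x`. -/
lemma step_lemma {r : ℕ} {x : G} (hx : dDist μ 1 x = r + 2) :
    ∃ b : G, 0 < μ b ∧ ∃ z : G, dDist μ 1 z = r + 1 ∧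
      exitProb μ (dBall μ 1 r) 1 z ≤ exitProb μ (dBall μ 1 (r + 1)) b x := by
  obtain ⟨L, h1, h2, h3⟩ := exists_geodesic hgen x
  rw [hx] at h1
  cases L with
  | nil => simp at h1
  | cons b L' =>
    have hb : 0 < μ b := h2 b (by simp)
    have hL' : ∀ s ∈ L', 0 < μ s := fun s hs => h2 s (by simp [hs])
    set z := L'.prod with hz
    have hxz : x = b * z := by rw [← h3, List.prod_cons]
    have hzle : dDist μ 1 z ≤ r + 1 := by
      have := dDist_le_of_list hL' hz.symm
      simp only [List.length_cons] at h1
      omega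
    have hzd : dDist μ 1 z = r + 1 := by
      rcases Nat.lt_or_ge (dDist μ 1 z) (r + 1) with hlt | hge
      · exfalso
        obtain ⟨M, hM1, hM2, hM3⟩ := exists_geodesic hgen z
        have : dDist μ 1 x ≤ (b :: M).length := by
          apply dDist_le_of_list
          · intro s hs
            rcases List.mem_cons.1 hs with rfl | hs
            · exact hb
            · exact hM2 s hs
          · rw [List.prod_cons, hM3, ← hxz]
        simp only [List.length_cons, hM1] at this
        omega
      · omega
    refine ⟨b, hb, z, hzd, ?_⟩
    have e1 : exitProb μ (dBall μ 1 r) 1 z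
        = exitProb μ ((b * ·) '' dBall μ 1 r) b (b * z) :=
      (exitProb_translate μ (dBall μ 1 r) b z).symm
    rw [e1, ← hxz]
    apply exitProb_mono_set hpos hfin hsum (smul_dBall_subset hgen hb r) b
    exact sphere_not_mem (r := r + 1) hx

lemma eps_step {r : ℕ} {x : G} (hx : dDist μ 1 x = r + 2) {b : G} :
    exitProb μ (dBall μ 1 (r + 1)) b x ≤
      (1 + epsRatio μ (dBall μ 1 (r + 1)) 1 b) * exitProb μ (dBall μ 1 (r + 1)) 1 x := by
  have hx' : dDist μ 1 x = (r + 1) + 1 := hx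
  have hp1 : 0 < exitProb μ (dBall μ 1 (r + 1)) 1 x :=
    exitProb_sphere_pos hpos hfin hsum hgen hx'
  have habs := abs_le_epsRatio hfin (dBall_finite hfin hgen (r + 1))
    (sphere_mem_bdry hgen hx') hp1 b
  have h3 : exitProb μ (dBall μ 1 (r + 1)) b x - exitProb μ (dBall μ 1 (r + 1)) 1 x ≤
      epsRatio μ (dBall μ 1 (r + 1)) 1 b * exitProb μ (dBall μ 1 (r + 1)) 1 x := by
    calc exitProb μ (dBall μ 1 (r + 1)) b x - exitProb μ (dBall μ 1 (r + 1)) 1 x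
        ≤ |exitProb μ (dBall μ 1 (r + 1)) b x - exitProb μ (dBall μ 1 (r + 1)) 1 x| :=
          le_abs_self _
      _ = |exitProb μ (dBall μ 1 (r + 1)) 1 x - exitProb μ (dBall μ 1 (r + 1)) b x| :=
          abs_sub_comm _ _
      _ ≤ epsRatio μ (dBall μ 1 (r + 1)) 1 b * exitProb μ (dBall μ 1 (r + 1)) 1 x := habs
  linarith

lemma key_lower (δ : ℕ → ℝ) (hδ0 : ∀ r, 0 ≤ δ r)
    (hδb : ∀ b : G, 0 < μ b → ∀ r, epsRatio μ (dBall μ 1 r) 1 b ≤ δ r)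
    (μmin : ℝ) (hμ0 : 0 < μmin) (hμle : ∀ b : G, 0 < μ b → μmin ≤ μ b) :
    ∀ r : ℕ, ∀ x : G, dDist μ 1 x = r + 1 →
      μmin / (∏ j ∈ Finset.range r, (1 + δ (j + 1))) ≤ exitProb μ (dBall μ 1 r) 1 x := by
  intro r
  induction r with
  | zero =>
    intro x hx
    obtain ⟨L, h1, h2, h3⟩ := exists_geodesic hgen x
    rw [hx] at h1
    simp only [Finset.range_zero, Finset.prod_empty, div_one]
    have hwt : wt μ L ≤ exitProb μ (dBall μ 1 0) 1 x :=
      single_le_exitProb hpos hfin hsum _ 1 (sphere_not_mem hx)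
        ⟨stays_dBall h2 (le_of_eq h1), by rwa [one_mul]⟩
    refine le_trans ?_ hwt
    cases L with
    | nil => simp at h1
    | cons b M =>
      have hM : M = [] := by
        simp only [List.length_cons] at h1
        exact List.length_eq_zero_iff.1 (by omega)
      subst hM
      simp only [wt, List.map_cons, List.map_nil, List.prod_cons, List.prod_nil, mul_one]
      exact hμle b (h2 b (by simp))
  | succ r ih =>
    intro x hx
    obtain ⟨b, hb, z, hzd, hstep⟩ := step_lemma hpos hfin hsum hgen hx
    have h1 := ih z hzd
    have h2 := eps_step hpos hfin hsum hgen hx (b := b)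
    have hδr := hδb b hb (r + 1)
    have hδnn := hδ0 (r + 1)
    set P : ℝ := ∏ j ∈ Finset.range r, (1 + δ (j + 1)) with hP
    have hP1 : (1 : ℝ) ≤ P := by
      rw [hP]
      calc (1 : ℝ) = ∏ _j ∈ Finset.range r, (1 : ℝ) := by simp
        _ ≤ ∏ j ∈ Finset.range r, (1 + δ (j + 1)) := by
            apply Finset.prod_le_prod
            · intro j _; norm_num
            · intro j _; linarith [hδ0 (j + 1)]
    have hP0 : (0 : ℝ) < P := by linarith
    have hPs : ∏ j ∈ Finset.range (r + 1), (1 + δ (j + 1)) = P * (1 + δ (r + 1)) := by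
      rw [Finset.prod_range_succ]
    rw [hPs]
    have hpx : 0 ≤ exitProb μ (dBall μ 1 (r + 1)) 1 x := exitProb_nonneg hpos hfin hsum _ 1 x
    have hchain : μmin / P ≤ (1 + δ (r + 1)) * exitProb μ (dBall μ 1 (r + 1)) 1 x := by
      calc μmin / P ≤ exitProb μ (dBall μ 1 r) 1 z := h1
        _ ≤ exitProb μ (dBall μ 1 (r + 1)) b x := hstep
        _ ≤ (1 + epsRatio μ (dBall μ 1 (r + 1)) 1 b) * exitProb μ (dBall μ 1 (r + 1)) 1 x := h2
        _ ≤ (1 + δ (r + 1)) * exitProb μ (dBall μ 1 (r + 1)) 1 x := by nlinarith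
    rw [div_le_iff₀ (by positivity)]
    rw [div_le_iff₀ hP0] at hchain
    nlinarith

lemma sphere_card_le (δ : ℕ → ℝ) (hδ0 : ∀ r, 0 ≤ δ r)
    (hδb : ∀ b : G, 0 < μ b → ∀ r, epsRatio μ (dBall μ 1 r) 1 b ≤ δ r)
    (μmin : ℝ) (hμ0 : 0 < μmin) (hμle : ∀ b : G, 0 < μ b → μmin ≤ μ b) (r : ℕ) :
    (({x : G | dDist μ 1 x = r + 1}.ncard : ℝ)) ≤
      (∏ j ∈ Finset.range r, (1 + δ (j + 1))) / μmin := by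
  set P : ℝ := ∏ j ∈ Finset.range r, (1 + δ (j + 1)) with hP
  have hP1 : (1 : ℝ) ≤ P := by
    rw [hP]
    calc (1 : ℝ) = ∏ _j ∈ Finset.range r, (1 : ℝ) := by simp
      _ ≤ ∏ j ∈ Finset.range r, (1 + δ (j + 1)) := by
          apply Finset.prod_le_prod
          · intro j _; norm_num
          · intro j _; linarith [hδ0 (j + 1)]
  have hP0 : (0 : ℝ) < P := by linarith
  have hsfin : ({x : G | dDist μ 1 x = r + 1}).Finite := by
    apply Set.Finite.subset (dBall_finite hfin hgen (r + 1))
    intro x hx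
    exact le_of_eq hx
  set T : Finset G := hsfin.toFinset with hT
  have hTsub : ∀ x ∈ T, x ∉ dBall μ 1 r := by
    intro x hx
    rw [hT, Set.Finite.mem_toFinset] at hx
    exact sphere_not_mem hx
  have hsum1 : ∑ x ∈ T, exitProb μ (dBall μ 1 r) 1 x ≤ 1 :=
    sum_exitProb_le hpos hfin hsum (dBall μ 1 r) 1 T hTsub
  have hlow : ∀ x ∈ T, μmin / P ≤ exitProb μ (dBall μ 1 r) 1 x := by
    intro x hx
    rw [hT, Set.Finite.mem_toFinset] at hx
    exact key_lower hpos hfin hsum hgen δ hδ0 hδb μmin hμ0 hμle r x hx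
  have hcard : (T.card : ℝ) * (μmin / P) ≤ 1 := by
    have := Finset.card_nsmul_le_sum T _ _ hlow
    rw [nsmul_eq_mul] at this
    exact le_trans this hsum1
  have hncard : ({x : G | dDist μ 1 x = r + 1}.ncard : ℝ) = (T.card : ℝ) := by
    rw [hT, Set.ncard_eq_toFinset_card _ hsfin]
  rw [hncard]
  rw [le_div_iff₀ hμ0]
  have hmp : 0 < μmin / P := by positivity
  calc (T.card : ℝ) * μmin = ((T.card : ℝ) * (μmin / P)) * P := by field_simp
    _ ≤ 1 * P := by nlinarith [Nat.cast_nonneg (α := ℝ) T.card]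
    _ = P := one_mul P

lemma ball_card_le (δ : ℕ → ℝ) (hδ0 : ∀ r, 0 ≤ δ r)
    (hδb : ∀ b : G, 0 < μ b → ∀ r, epsRatio μ (dBall μ 1 r) 1 b ≤ δ r)
    (μmin : ℝ) (hμ0 : 0 < μmin) (hμle : ∀ b : G, 0 < μ b → μmin ≤ μ b) (s : ℕ) :
    ((dBall μ 1 s).ncard : ℝ) ≤
      1 + ∑ r ∈ Finset.range s, (∏ j ∈ Finset.range r, (1 + δ (j + 1))) / μmin := by
  induction s with
  | zero =>
    simp only [Finset.range_zero, Finset.sum_empty, add_zero]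
    have hsub : dBall μ 1 0 ⊆ ({1} : Set G) := fun g hg => mem_dBall_zero hgen hg
    have := Set.ncard_le_ncard hsub (Set.finite_singleton 1)
    rw [Set.ncard_singleton] at this
    exact_mod_cast this
  | succ s ih =>
    have hsub : dBall μ 1 (s + 1) ⊆ dBall μ 1 s ∪ {x : G | dDist μ 1 x = s + 1} := by
      intro g hg
      have : dDist μ 1 g ≤ s + 1 := hg
      rcases Nat.lt_or_ge (dDist μ 1 g) (s + 1) with h | h
      · exact Or.inl (Nat.lt_succ_iff.1 h)
      · exact Or.inr (le_antisymm hg h)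
    have h1 : ((dBall μ 1 (s + 1)).ncard : ℝ) ≤
        ((dBall μ 1 s).ncard : ℝ) + (({x : G | dDist μ 1 x = s + 1}).ncard : ℝ) := by
      have hfin1 : (dBall μ 1 s ∪ {x : G | dDist μ 1 x = s + 1}).Finite := by
        apply Set.Finite.union (dBall_finite hfin hgen s)
        apply Set.Finite.subset (dBall_finite hfin hgen (s + 1))
        intro x hx
        exact le_of_eq hx
      have hm := Set.ncard_le_ncard hsub hfin1
      have hu := Set.ncard_union_le (dBall μ 1 s) {x : G | dDist μ 1 x = s + 1}
      exact_mod_cast le_trans hm hu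
    refine le_trans h1 ?_
    rw [Finset.sum_range_succ]
    have h2 := sphere_card_le hpos hfin hsum hgen δ hδ0 hδb μmin hμ0 hμle s
    linarith

end Main
end RWaux

open Classical Finset

open RWaux in
/-- If `ε(B(e,r); e, b) → 0` as `r → ∞` for every `b ∈ supp μ`, then the directed
balls grow subexponentially: for every `c > 1` there is `C > 0` with `|B(e,s)| ≤ C c^s`. -/
theorem subexponential_growth_of_eps_tendsto_zero
    {G : Type*} [Group G] [Countable G] (μ : G → ℝ)
    (hpos : ∀ s : G, 0 ≤ μ s) (hfin : (Function.support μ).Finite)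
    (hsum : ∑ᶠ s : G, μ s = 1)
    (hgen : ∀ g : G, ∃ L : List G, (∀ s ∈ L, 0 < μ s) ∧ L.prod = g)
    (heps : ∀ b : G, 0 < μ b →
      Filter.Tendsto (fun r : ℕ => epsRatio μ (dBall μ 1 r) 1 b) Filter.atTop (nhds 0)) :
    ∀ c : ℝ, 1 < c → ∃ C : ℝ, 0 < C ∧ ∀ s : ℕ,
      ((dBall μ 1 s).ncard : ℝ) ≤ C * c ^ s := by
  classical
  intro c hc
  -- the support as a finset
  set A : Finset G := hfin.toFinset with hA
  have hAmem : ∀ b : G, b ∈ A ↔ μ b ≠ 0 := by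
    intro b; simp [hA]
  have hApos : ∀ b ∈ A, 0 < μ b := fun b hb =>
    lt_of_le_of_ne (hpos b) (Ne.symm ((hAmem b).1 hb))
  have hAne : A.Nonempty := by
    by_contra hne
    rw [Finset.not_nonempty_iff_eq_empty] at hne
    have : ∑ᶠ s : G, μ s = 0 := by
      rw [finsum_eq_sum_of_support_subset μ (s := A) (by simp [hA])]
      rw [hne, Finset.sum_empty]
    rw [hsum] at this
    norm_num at this
  -- minimal positive weight
  set μmin : ℝ := A.inf' hAne μ with hμmin
  have hμ0 : 0 < μmin := by
    rw [hμmin, Finset.lt_inf'_iff]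
    exact fun b hb => hApos b hb
  have hμle : ∀ b : G, 0 < μ b → μmin ≤ μ b := by
    intro b hb
    exact Finset.inf'_le μ ((hAmem b).2 (ne_of_gt hb))
  -- the uniform epsilon bound
  set δ : ℕ → ℝ := fun r => ∑ b ∈ A, |epsRatio μ (dBall μ 1 r) 1 b| with hδ
  have hδ0 : ∀ r, 0 ≤ δ r := fun r => Finset.sum_nonneg (fun b _ => abs_nonneg _)
  have hδb : ∀ b : G, 0 < μ b → ∀ r, epsRatio μ (dBall μ 1 r) 1 b ≤ δ r := by
    intro b hb r
    refine le_trans (le_abs_self _) ?_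
    exact Finset.single_le_sum (f := fun b => |epsRatio μ (dBall μ 1 r) 1 b|)
      (fun b _ => abs_nonneg _) ((hAmem b).2 (ne_of_gt hb))
  have hδtendsto : Filter.Tendsto δ Filter.atTop (nhds 0) := by
    have : Filter.Tendsto (fun r : ℕ => ∑ b ∈ A, |epsRatio μ (dBall μ 1 r) 1 b|)
        Filter.atTop (nhds (∑ b ∈ A, (0 : ℝ))) := by
      apply tendsto_finset_sum
      intro b hb
      have := (heps b (hApos b hb)).abs
      simpa using this
    simpa using this
  -- geometric comparison constant
  set c' : ℝ := (1 + c) / 2 with hc'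
  have hc'1 : 1 < c' := by rw [hc']; linarith
  have hc'c : c' < c := by rw [hc']; linarith
  have hc'0 : 0 < c' := by linarith
  -- eventually the product grows slower than c'
  have hev : ∀ᶠ r in Filter.atTop, δ r < c' - 1 :=
    Filter.Tendsto.eventually_lt_const (by linarith) hδtendsto
  obtain ⟨N, hN⟩ := Filter.eventually_atTop.1 hev
  -- the products P r
  set P : ℕ → ℝ := fun r => ∏ j ∈ Finset.range r, (1 + δ (j + 1)) with hP
  have hP1 : ∀ r, (1 : ℝ) ≤ P r := by
    intro r
    rw [hP]
    calc (1 : ℝ) = ∏ _j ∈ Finset.range r, (1 : ℝ) := by simp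
      _ ≤ ∏ j ∈ Finset.range r, (1 + δ (j + 1)) := by
          apply Finset.prod_le_prod
          · intro j _; norm_num
          · intro j _; linarith [hδ0 (j + 1)]
  have hP0 : ∀ r, (0 : ℝ) < P r := fun r => lt_of_lt_of_le one_pos (hP1 r)
  -- the dominating constant D
  set D : ℝ := (Finset.range (N + 2)).sup' ⟨0, by simp⟩ (fun r => P r / c' ^ r) with hD
  have hDr : ∀ r ≤ N + 1, P r / c' ^ r ≤ D := by
    intro r hr
    exact Finset.le_sup' (f := fun r => P r / c' ^ r) (Finset.mem_range.2 (by omega))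
  have hD1 : (1 : ℝ) ≤ D := by
    have := hDr 0 (by omega)
    simpa [hP] using this
  have hD0 : (0 : ℝ) < D := by linarith
  -- P r ≤ D * c'^r for all r
  have hPD : ∀ r, P r ≤ D * c' ^ r := by
    intro r
    induction r with
    | zero =>
      simp only [pow_zero, mul_one]
      calc P 0 = 1 := by simp [hP]
        _ ≤ D := hD1
    | succ r ih =>
      rcases Nat.lt_or_ge (r + 1) (N + 2) with h | h
      · have := hDr (r + 1) (by omega)
        rw [div_le_iff₀ (by positivity)] at this
        exact this
      · have hrN : N ≤ r + 1 := by omega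
        have hδlt : δ (r + 1) < c' - 1 := hN (r + 1) hrN
        have hPs : P (r + 1) = P r * (1 + δ (r + 1)) := by
          rw [hP]; exact Finset.prod_range_succ _ r
        rw [hPs, pow_succ]
        have h1 : (0 : ℝ) < 1 + δ (r + 1) := by linarith [hδ0 (r + 1)]
        calc P r * (1 + δ (r + 1)) ≤ (D * c' ^ r) * (1 + δ (r + 1)) := by nlinarith [hP0 r]
          _ ≤ (D * c' ^ r) * c' := by
              have : (0 : ℝ) ≤ D * c' ^ r := by positivity
              nlinarith
          _ = D * (c' ^ r * c') := by ring
  -- final constant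
  have hc'm : (0 : ℝ) < c' - 1 := by linarith
  refine ⟨1 + D / (μmin * (c' - 1)), by positivity, ?_⟩
  intro s
  have hball := ball_card_le hpos hfin hsum hgen δ hδ0 hδb μmin hμ0 hμle s
  have hsumP : ∑ r ∈ Finset.range s, P r / μmin ≤ (D / μmin) * (c' ^ s - 1) / (c' - 1) := by
    have h1 : ∑ r ∈ Finset.range s, P r / μmin ≤ ∑ r ∈ Finset.range s, (D / μmin) * c' ^ r := by
      apply Finset.sum_le_sum
      intro r _
      rw [div_le_iff₀ hμ0]
      calc P r ≤ D * c' ^ r := hPD r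
        _ = (D / μmin) * c' ^ r * μmin := by field_simp
    refine le_trans h1 ?_
    rw [← Finset.mul_sum, geom_sum_eq (ne_of_gt hc'1) s]
    rw [mul_div_assoc]
  have hgeo : (D / μmin) * (c' ^ s - 1) / (c' - 1) ≤ (D / (μmin * (c' - 1))) * c ^ s := by
    have hc's : c' ^ s ≤ c ^ s := pow_le_pow_left₀ (le_of_lt hc'0) (le_of_lt hc'c) s
    have hcs0 : (0 : ℝ) < c' ^ s := pow_pos hc'0 s
    have hDm : (0 : ℝ) < D / μmin := by positivity
    rw [div_le_iff₀ hc'm]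
    have heq : (D / (μmin * (c' - 1))) * c ^ s * (c' - 1) = (D / μmin) * c ^ s := by
      have hm : μmin ≠ 0 := ne_of_gt hμ0
      have h2 : c' - 1 ≠ 0 := ne_of_gt hc'm
      field_simp
    rw [heq]
    nlinarith
  have hcs1 : (1 : ℝ) ≤ c ^ s := one_le_pow₀ (by linarith)
  calc ((dBall μ 1 s).ncard : ℝ) ≤ 1 + ∑ r ∈ Finset.range s, P r / μmin := hball
    _ ≤ 1 + (D / μmin) * (c' ^ s - 1) / (c' - 1) := by linarith
    _ ≤ 1 * c ^ s + (D / (μmin * (c' - 1))) * c ^ s := by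
        rw [one_mul]
        linarith
    _ = (1 + D / (μmin * (c' - 1))) * c ^ s := by ring
end
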